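/- arXiv:2205.05992 — 7 statements merged into one kernel-verified Lean document; each statement's English description precedes it below -/
import Mathlib

section
/- Let G : [0,∞) → ℂ be a function such that for every x ≥ 0 the improper integral ∫₀ˣ |G(t)|/t dt is finite, and suppose G(x) - ∫₀ˣ G(t)/t dt = 0 for all x ≥ 0. Then there exists a complex number A such that G(x) = A·x for all x ≥ 0. -/
open MeasureTheory Set intervalIntegral

/-- If `G : [0,∞) → ℂ` is such that `t ↦ G(t)/t` is (absolutely) integrable on `(0,x]`
for every `x ≥ 0`, and `G(x) - ∫₀ˣ G(t)/t dt = 0` for all `x ≥ 0`, then `G(x) = A·x`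
for some complex constant `A`. -/
theorem volterra_homogeneous (G : ℝ → ℂ)
    (hint : ∀ x ≥ (0:ℝ), MeasureTheory.IntegrableOn (fun t => G t / (t:ℂ)) (Set.Ioc 0 x))
    (heq : ∀ x ≥ (0:ℝ), G x - ∫ t in Set.Ioc (0:ℝ) x, G t / (t:ℂ) = 0) :
    ∃ A : ℂ, ∀ x ≥ (0:ℝ), G x = A * x := by
  set f : ℝ → ℂ := fun t => G t / (t:ℂ) with hfdef
  have hG : ∀ x ≥ (0:ℝ), G x = ∫ t in Set.Ioc (0:ℝ) x, f t := fun x hx =>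
    sub_eq_zero.mp (heq x hx)
  -- interval integrability
  have hii : ∀ x ≥ (0:ℝ), IntervalIntegrable f volume 0 x := fun x hx => by
    rw [intervalIntegrable_iff_integrableOn_Ioc_of_le hx]; exact hint x hx
  -- G agrees with the interval-integral primitive on [0,∞)
  have hGF : ∀ x ≥ (0:ℝ), G x = ∫ t in (0:ℝ)..x, f t := fun x hx => by
    rw [intervalIntegral.integral_of_le hx]; exact hG x hx
  -- continuity of G at each positive point
  have hGcont : ∀ x > (0:ℝ), ContinuousAt G x := by
    intro x hx
    have hb : (0:ℝ) ≤ x + 1 := by linarith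
    have hprim : ContinuousOn (fun y => ∫ t in Set.Ioc (0:ℝ) y, f t) (Icc 0 (x+1)) :=
      intervalIntegral.continuousOn_primitive
        ((integrableOn_Icc_iff_integrableOn_Ioc).mpr (hint (x+1) hb))
    have hx' : x ∈ Ioo (0:ℝ) (x+1) := ⟨hx, by linarith⟩
    have hmem : Icc (0:ℝ) (x+1) ∈ nhds x := Icc_mem_nhds hx'.1 hx'.2
    have hCA : ContinuousAt (fun y => ∫ t in Set.Ioc (0:ℝ) y, f t) x :=
      (hprim x ⟨le_of_lt hx, by linarith⟩).continuousAt hmem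
    refine hCA.congr ?_
    filter_upwards [Ioo_mem_nhds hx'.1 hx'.2] with y hy
    exact (hG y hy.1.le).symm
  -- continuity of f at each positive point
  have hfcont : ∀ x > (0:ℝ), ContinuousAt f x := by
    intro x hx
    exact (hGcont x hx).div (Complex.continuous_ofReal.continuousAt)
      (by exact_mod_cast ne_of_gt hx)
  have hfcontOn : ContinuousOn f (Ioi 0) := fun x hx =>
    (hfcont x hx).continuousWithinAt
  -- G has derivative f x at each x > 0
  have hderivG : ∀ x > (0:ℝ), HasDerivAt G (f x) x := by
    intro x hx
    have hmeas : StronglyMeasurableAtFilter f (nhds x) :=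
      ContinuousOn.stronglyMeasurableAtFilter isOpen_Ioi hfcontOn x hx
    have hF : HasDerivAt (fun u => ∫ t in (0:ℝ)..u, f t) (f x) x :=
      intervalIntegral.integral_hasDerivAt_right (hii x hx.le) hmeas (hfcont x hx)
    refine hF.congr_of_eventuallyEq ?_
    filter_upwards [Ioi_mem_nhds hx] with y hy
    exact hGF y (le_of_lt hy)
  -- h = G x / x has zero derivative on (0,∞)
  set h : ℝ → ℂ := fun x => G x / (x:ℂ) with hhdef
  have hderivh : ∀ x > (0:ℝ), HasDerivAt h 0 x := by
    intro x hx
    have hxne : (x:ℂ) ≠ 0 := by exact_mod_cast ne_of_gt hx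
    have hid : HasDerivAt (fun y : ℝ => (y:ℂ)) 1 x := by
      exact Complex.ofRealCLM.hasDerivAt (x := x)
    have hd := (hderivG x hx).div hid hxne
    have h0 : (f x * (x:ℂ) - G x * 1) / (x:ℂ)^2 = 0 := by
      show ((G x / (x:ℂ)) * (x:ℂ) - G x * 1) / (x:ℂ)^2 = 0
      field_simp
      simp
    rw [h0] at hd
    exact hd
  -- h is constant on (0,∞)
  have hconst : ∀ x > (0:ℝ), h x = h 1 := by
    have key : ∀ a > (0:ℝ), ∀ b, a ≤ b → h b = h a := by
      intro a ha b hab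
      have hcont : ContinuousOn h (Icc a b) := fun y hy =>
        ((hderivh y (lt_of_lt_of_le ha hy.1)).continuousAt).continuousWithinAt
      have hd : ∀ y ∈ Ico a b, HasDerivWithinAt h 0 (Ici y) y := fun y hy =>
        ((hderivh y (lt_of_lt_of_le ha hy.1)).hasDerivWithinAt)
      exact constant_of_has_deriv_right_zero hcont hd b ⟨hab, le_rfl⟩
    intro x hx
    rcases le_total x 1 with hx1 | hx1
    · exact (key x hx 1 hx1).symm
    · exact key 1 one_pos x hx1
  refine ⟨G 1, ?_⟩
  intro x hx
  rcases eq_or_lt_of_le hx with rfl | hx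
  · have h0 : G 0 = 0 := by simpa using hG 0 le_rfl
    simp [h0]
  · have hxne : (x:ℂ) ≠ 0 := by exact_mod_cast ne_of_gt hx
    have hc : G x / (x:ℂ) = G 1 := by simpa [hhdef] using hconst x hx
    rw [div_eq_iff hxne] at hc
    rw [hc]
end

section
/- Let α : ℕ → ℂ be a function with α(n) ≪ n^ε for every ε > 0, such that the series ∑_{n=1}^∞ α(n)/n converges. Define f₁(x) = ∑_{n=1}^∞ (α(n)/n)·s(x/n), where s(x) = 0 if x ∈ ℤ and s(x) = 1/2 - {x} otherwise. Then for every positive integer N, f₁(N) = (1/2)(f₁(N+0) + f₁(N-0)), where f₁(N±0) denote the one-sided limits of f₁ at N. -/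
open Filter Topology Classical

/-- The saw-tooth function: `s(x) = 0` for integer `x`, `1/2 - {x}` otherwise. -/

noncomputable def saw (x : ℝ) : ℝ := if ∃ k : ℤ, x = (k : ℝ) then 0 else 1/2 - Int.fract x

lemma saw_of_fract_ne {x : ℝ} (h : Int.fract x ≠ 0) : saw x = 1/2 - Int.fract x := by
  rw [saw, if_neg]
  rintro ⟨k, rfl⟩
  simp [Int.fract_intCast] at h

lemma saw_int (k : ℤ) : saw (k : ℝ) = 0 := by
  rw [saw, if_pos ⟨k, rfl⟩]

lemma saw_sym {N n : ℕ} (hn : 1 ≤ n) {t : ℝ} (ht : 0 < t) (ht1 : t < 1) :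
    saw (((N:ℝ) + t)/n) + saw (((N:ℝ) - t)/n) = 2 * saw ((N:ℝ)/n) := by
  have hn0 : (0:ℝ) < n := by exact_mod_cast hn
  set q := N / n with hq
  set r := N % n with hr
  have hNqr : (N:ℝ) = n * q + r := by exact_mod_cast (Nat.div_add_mod N n).symm
  have hrn : r < n := Nat.mod_lt _ hn
  have hrnR : (r:ℝ) < n := by exact_mod_cast hrn
  rcases Nat.eq_zero_or_pos r with h0 | hpos
  · -- n ∣ N
    have h1 : (N:ℝ)/n = ((q:ℤ):ℝ) := by
      rw [hNqr, h0]; push_cast; field_simp; ring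
    have h2 : ((N:ℝ)+t)/n = ((q:ℤ):ℝ) + t/n := by
      rw [hNqr, h0]; push_cast; field_simp; ring
    have h3 : ((N:ℝ)-t)/n = (((q:ℤ) - 1 : ℤ):ℝ) + (1 - t/n) := by
      rw [hNqr, h0]; push_cast; field_simp; ring
    have htn : 0 < t/n := by positivity
    have htn1 : t/n < 1 := by
      rw [div_lt_one hn0]; linarith [show (1:ℝ) ≤ n by exact_mod_cast hn]
    have f2 : Int.fract (((N:ℝ)+t)/n) = t/n := by
      rw [h2, Int.fract_intCast_add, Int.fract_eq_self.2 ⟨le_of_lt htn, htn1⟩]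
    have f3 : Int.fract (((N:ℝ)-t)/n) = 1 - t/n := by
      rw [h3, Int.fract_intCast_add, Int.fract_eq_self.2 ⟨by linarith, by linarith⟩]
    rw [h1, saw_int, saw_of_fract_ne (by rw [f2]; linarith),
      saw_of_fract_ne (by rw [f3]; linarith), f2, f3]
    ring
  · have hr1 : (1:ℝ) ≤ r := by exact_mod_cast hpos
    have h1 : (N:ℝ)/n = ((q:ℤ):ℝ) + r/n := by rw [hNqr]; push_cast; field_simp
    have h2 : ((N:ℝ)+t)/n = ((q:ℤ):ℝ) + (r+t)/n := by rw [hNqr]; push_cast; field_simp; ring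
    have h3 : ((N:ℝ)-t)/n = ((q:ℤ):ℝ) + (r-t)/n := by rw [hNqr]; push_cast; field_simp; ring
    have hrn' : (r:ℝ) + 1 ≤ n := by exact_mod_cast hrn
    have f1 : Int.fract ((N:ℝ)/n) = r/n := by
      rw [h1, Int.fract_intCast_add, Int.fract_eq_self.2 ⟨by positivity, by rw [div_lt_one hn0]; linarith⟩]
    have f2 : Int.fract (((N:ℝ)+t)/n) = (r+t)/n := by
      rw [h2, Int.fract_intCast_add, Int.fract_eq_self.2 ⟨by positivity, by rw [div_lt_one hn0]; linarith⟩]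
    have f3 : Int.fract (((N:ℝ)-t)/n) = (r-t)/n := by
      rw [h3, Int.fract_intCast_add, Int.fract_eq_self.2 ⟨le_of_lt (div_pos (by linarith) hn0), by rw [div_lt_one hn0]; linarith⟩]
    rw [saw_of_fract_ne (by rw [f2]; exact ne_of_gt (div_pos (by linarith) hn0)),
      saw_of_fract_ne (by rw [f3]; exact ne_of_gt (div_pos (by linarith) hn0)),
      saw_of_fract_ne (by rw [f1]; exact ne_of_gt (div_pos (by linarith) hn0)), f1, f2, f3]
    ring


/-- If `α(n) ≪ n^ε` for every `ε > 0` and `∑ α(n)/n` converges, and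
`f₁(x) = ∑_{n=1}^∞ (α(n)/n) s(x/n)` (as a limit of partial sums), then at every
positive integer `N` the value `f₁(N)` is the average of the one-sided limits. -/
theorem f1_mean_of_one_sided_limits (α : ℕ → ℂ)
    (hgrow : ∀ ε : ℝ, 0 < ε → ∃ c : ℝ, ∀ n : ℕ, 1 ≤ n → ‖α n‖ ≤ c * (n : ℝ) ^ ε)
    (hα : ∃ l : ℂ, Tendsto (fun N : ℕ => ∑ n ∈ Finset.Icc 1 N, α n / (n : ℂ))
      atTop (𝓝 l))
    (f₁ : ℝ → ℂ)
    (hf₁ : ∀ x : ℝ, Tendsto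
      (fun N : ℕ => ∑ n ∈ Finset.Icc 1 N, (α n / (n : ℂ)) * ((saw (x / n) : ℝ) : ℂ))
      atTop (𝓝 (f₁ x)))
    (N : ℕ) (hN : 0 < N) (Lp Lm : ℂ)
    (hLp : Tendsto f₁ (nhdsWithin (N : ℝ) (Set.Ioi (N : ℝ))) (𝓝 Lp))
    (hLm : Tendsto f₁ (nhdsWithin (N : ℝ) (Set.Iio (N : ℝ))) (𝓝 Lm)) :
    f₁ (N : ℝ) = (Lp + Lm) / 2 := by
  have key : ∀ t : ℝ, 0 < t → t < 1 →
      f₁ ((N:ℝ) + t) + f₁ ((N:ℝ) - t) = 2 * f₁ (N:ℝ) := by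
    intro t ht ht1
    have h1 := (hf₁ ((N:ℝ) + t)).add (hf₁ ((N:ℝ) - t))
    have h2 : Tendsto (fun K : ℕ =>
        (∑ n ∈ Finset.Icc 1 K, (α n / (n : ℂ)) * ((saw (((N:ℝ)+t) / n) : ℝ) : ℂ)) +
        (∑ n ∈ Finset.Icc 1 K, (α n / (n : ℂ)) * ((saw (((N:ℝ)-t) / n) : ℝ) : ℂ)))
        atTop (𝓝 (2 * f₁ (N:ℝ))) := by
      have h3 := (hf₁ (N:ℝ)).const_mul (2:ℂ)
      apply h3.congr
      intro K
      rw [← Finset.sum_add_distrib, Finset.mul_sum]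
      refine Finset.sum_congr rfl fun n hn => ?_
      have hn1 : 1 ≤ n := (Finset.mem_Icc.1 hn).1
      have hs := saw_sym (N := N) hn1 ht ht1
      rw [← mul_add, ← Complex.ofReal_add, hs]
      push_cast
      ring
    exact tendsto_nhds_unique h1 h2
  have hmap : Tendsto (fun x : ℝ => 2*(N:ℝ) - x) (𝓝[>] (N:ℝ)) (𝓝[<] (N:ℝ)) := by
    rw [tendsto_nhdsWithin_iff]
    constructor
    · have : Tendsto (fun x : ℝ => 2*(N:ℝ) - x) (𝓝 (N:ℝ)) (𝓝 (2*(N:ℝ) - N)) :=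
        (continuous_const.sub continuous_id).tendsto _
      have h := this.mono_left (nhdsWithin_le_nhds (s := Set.Ioi (N:ℝ)))
      convert h using 2
      ring
    · filter_upwards [self_mem_nhdsWithin] with x hx
      simp only [Set.mem_Ioi] at hx
      simp only [Set.mem_Iio]
      linarith
  have hsum : Tendsto (fun x : ℝ => f₁ x + f₁ (2*(N:ℝ) - x)) (𝓝[>] (N:ℝ))
      (𝓝 (Lp + Lm)) := hLp.add (hLm.comp hmap)
  have hconst : Tendsto (fun x : ℝ => f₁ x + f₁ (2*(N:ℝ) - x)) (𝓝[>] (N:ℝ))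
      (𝓝 (2 * f₁ (N:ℝ))) := by
    apply Tendsto.congr' _ tendsto_const_nhds
    filter_upwards [Ioo_mem_nhdsGT_of_mem (Set.left_mem_Ico.2 (by linarith : (N:ℝ) < N+1))]
      with x hx
    have ht : 0 < x - N := by linarith [hx.1]
    have ht1 : x - N < 1 := by linarith [hx.2]
    have hk := key (x - N) ht ht1
    have e1 : (N:ℝ) + (x - N) = x := by ring
    have e2 : (N:ℝ) - (x - N) = 2*(N:ℝ) - x := by ring
    rw [e1, e2] at hk
    exact hk.symm
  have hfin : Lp + Lm = 2 * f₁ (N:ℝ) := tendsto_nhds_unique hsum hconst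
  rw [hfin]
  ring
end

section
/- Let F be a polynomial Euler product of degree d, α(n) = μ(n)∏_{p|n}γ(p) with γ(p) = p(1-1/F_p(1)), C(F) = (1/2)∏_p(1-γ(p)/p²), and assume ∑_{n=1}^∞ α(n)/n converges. Define E(x,F) = ∑_{n≤x} n∑_{m|n}α(m)/m - C(F)x², and the normalized error E₂(x,F) equal to E(x,F) for non-integer x and to (E(x-0,F)+E(x+0,F))/2 at positive integers. Define f₁(x,F) = ∑_{n=1}^∞ (α(n)/n)s(x/n) and R(x,F) = E₂(x,F) - x·f₁(x,F). Then for all x > 0, R(x,F) = -∫₀ˣ f₁(t,F) dt. -/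
open Filter Topology Classical

/-- `γ(p) = p(1 - 1/F_p(1))` where `F_p(1)⁻¹ = ∏_j (1 - α_j(p)/p)` is the inverse of the
local Euler factor at `p` evaluated at `s = 1`. -/
noncomputable def gammaF {d : ℕ} (a : ℕ → Fin d → ℂ) (p : ℕ) : ℂ :=
  (p : ℂ) * (1 - ∏ j : Fin d, (1 - a p j / (p : ℂ)))

/-- `α(n) = μ(n) ∏_{p|n} γ(p)`. -/
noncomputable def alphaF {d : ℕ} (a : ℕ → Fin d → ℂ) (n : ℕ) : ℂ :=
  ((ArithmeticFunction.moebius n : ℤ) : ℂ) * ∏ p ∈ n.primeFactors, gammaF a p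

/-- The associated Euler totient function `φ(n,F) = n ∏_{p|n} F_p(1)⁻¹`. -/
noncomputable def phiF {d : ℕ} (a : ℕ → Fin d → ℂ) (n : ℕ) : ℂ :=
  (n : ℂ) * ∏ p ∈ n.primeFactors, ∏ j : Fin d, (1 - a p j / (p : ℂ))

lemma prod_bound {ι : Type*} (s : Finset ι) (w : ι → ℂ) (ε : ℝ) (hε : 0 ≤ ε)
    (h : ∀ i ∈ s, ‖1 - w i‖ ≤ ε) :
    ‖∏ i ∈ s, w i‖ ≤ (1+ε)^s.card ∧
      ‖1 - ∏ i ∈ s, w i‖ ≤ s.card * ε * (1+ε)^s.card := by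
  classical
  induction s using Finset.cons_induction with
  | empty => simp
  | cons i s hi ih =>
    obtain ⟨ih1, ih2⟩ := ih (fun j hj => h j (Finset.mem_cons_of_mem hj))
    have hwi : ‖1 - w i‖ ≤ ε := h i (Finset.mem_cons_self i s)
    have hwin : ‖w i‖ ≤ 1 + ε := by
      calc ‖w i‖ = ‖1 - (1 - w i)‖ := by ring_nf
      _ ≤ ‖(1:ℂ)‖ + ‖1 - w i‖ := norm_sub_le _ _
      _ ≤ 1 + ε := by rw [norm_one]; linarith
    have hp1 : (0:ℝ) ≤ (1+ε)^s.card := by positivity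
    constructor
    · rw [Finset.prod_cons, Finset.card_cons, norm_mul, pow_succ]
      calc ‖w i‖ * ‖∏ j ∈ s, w j‖ ≤ (1+ε) * (1+ε)^s.card := by
            apply mul_le_mul hwin ih1 (norm_nonneg _) (by linarith)
      _ = (1+ε)^s.card * (1+ε) := by ring
    · rw [Finset.prod_cons, Finset.card_cons]
      have key : (1:ℂ) - w i * ∏ j ∈ s, w j
          = (1 - ∏ j ∈ s, w j) + (1 - w i) * ∏ j ∈ s, w j := by ring
      rw [key]
      calc ‖(1 - ∏ j ∈ s, w j) + (1 - w i) * ∏ j ∈ s, w j‖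
          ≤ ‖1 - ∏ j ∈ s, w j‖ + ‖1 - w i‖ * ‖∏ j ∈ s, w j‖ := by
            refine (norm_add_le _ _).trans ?_
            rw [norm_mul]
      _ ≤ s.card * ε * (1+ε)^s.card + ε * (1+ε)^s.card := by
            gcongr
      _ = (s.card + 1) * ε * (1+ε)^s.card := by ring
      _ ≤ (s.card + 1) * ε * (1+ε)^(s.card+1) := by
            have : ((1:ℝ)+ε)^s.card ≤ (1+ε)^(s.card+1) := by
              apply pow_le_pow_right₀ (by linarith) (Nat.le_succ _)
            gcongr
      _ = (↑(s.card + 1) : ℝ) * ε * (1 + ε) ^ (s.card + 1) := by push_cast; ring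

lemma gammaF_norm_le {d : ℕ} (a : ℕ → Fin d → ℂ)
    (ha : ∀ p : ℕ, p.Prime → ∀ j : Fin d, ‖a p j‖ ≤ 1)
    {p : ℕ} (hp : p.Prime) : ‖gammaF a p‖ ≤ d * 2^d := by
  have hp0 : (0:ℝ) < p := by exact_mod_cast hp.pos
  have hp2 : (2:ℝ) ≤ p := by exact_mod_cast hp.two_le
  have hb := (prod_bound Finset.univ (fun j : Fin d => 1 - a p j / p) (1/p)
    (by positivity) ?_).2
  · rw [gammaF, norm_mul, Complex.norm_natCast]
    have hc : ∀ j ∈ Finset.univ, ((1:ℂ) - a p j / p) = (fun j : Fin d => 1 - a p j / p) j :=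
      fun _ _ => rfl
    calc (p:ℝ) * ‖1 - ∏ j : Fin d, (1 - a p j / p)‖
        ≤ (p:ℝ) * ((Finset.univ : Finset (Fin d)).card * (1/p) * (1+1/p)^(Finset.univ : Finset (Fin d)).card) := by
          gcongr
    _ = d * (1+1/p)^d := by
          rw [Finset.card_univ, Fintype.card_fin]
          field_simp
    _ ≤ d * 2^d := by
          have h2 : (1:ℝ)/p ≤ 1 := by rw [div_le_one hp0]; linarith
          gcongr
          linarith
  · intro j _
    simp only [sub_sub_cancel, norm_div, Complex.norm_natCast]
    gcongr
    exact ha p hp j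

lemma prod_sqrt_nat (s : Finset ℕ) : ∏ p ∈ s, Real.sqrt p = Real.sqrt (∏ p ∈ s, (p:ℝ)) := by
  classical
  induction s using Finset.cons_induction with
  | empty => simp
  | cons i s hi ih =>
    rw [Finset.prod_cons, Finset.prod_cons, ih, ← Real.sqrt_mul (Nat.cast_nonneg i)]

lemma moebius_norm_le_one (n : ℕ) : ‖((ArithmeticFunction.moebius n : ℤ) : ℂ)‖ ≤ 1 := by
  by_cases h : Squarefree n
  · rw [ArithmeticFunction.moebius_apply_of_squarefree h]
    push_cast
    rw [norm_pow, norm_neg, norm_one, one_pow]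
  · rw [ArithmeticFunction.moebius_eq_zero_of_not_squarefree h]
    simp

lemma alphaF_norm_le {d : ℕ} (a : ℕ → Fin d → ℂ)
    (ha : ∀ p : ℕ, p.Prime → ∀ j : Fin d, ‖a p j‖ ≤ 1) {n : ℕ} (hn : n ≠ 0) :
    ‖alphaF a n‖ ≤ ((d:ℝ) * 2^d + 1)^(⌈((d:ℝ) * 2^d + 1)^2⌉₊ + 1) * Real.sqrt n := by
  set Kc : ℝ := (d:ℝ) * 2^d + 1 with hKc
  have hKc1 : (1:ℝ) ≤ Kc := by
    have : (0:ℝ) ≤ (d:ℝ) * 2^d := by positivity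
    linarith
  set m₀ : ℕ := ⌈Kc^2⌉₊ with hm₀
  have h1 : ‖alphaF a n‖ ≤ ∏ p ∈ n.primeFactors, Kc := by
    rw [alphaF, norm_mul]
    calc ‖((ArithmeticFunction.moebius n : ℤ) : ℂ)‖ * ‖∏ p ∈ n.primeFactors, gammaF a p‖
        ≤ 1 * ∏ p ∈ n.primeFactors, Kc := by
          apply mul_le_mul (moebius_norm_le_one n) ?_ (norm_nonneg _) zero_le_one
          apply (Finset.norm_prod_le _ _).trans
          apply Finset.prod_le_prod (fun _ _ => norm_nonneg _)
          intro p hp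
          have hple := gammaF_norm_le a ha (Nat.prime_of_mem_primeFactors hp)
          rw [hKc]; linarith
    _ = ∏ p ∈ n.primeFactors, Kc := one_mul _
  have h2 : ∏ p ∈ n.primeFactors, Kc ≤ Kc^(m₀+1) * Real.sqrt n := by
    classical
    set s := n.primeFactors with hs
    set s₁ := s.filter (fun p => p ≤ m₀) with hs₁
    set s₂ := s.filter (fun p => ¬ p ≤ m₀) with hs₂
    have hsplit : ∏ p ∈ s, Kc = (∏ p ∈ s₁, Kc) * ∏ p ∈ s₂, Kc :=
      (Finset.prod_filter_mul_prod_filter_not s _ _).symm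
    have hb1 : ∏ p ∈ s₁, Kc ≤ Kc^(m₀+1) := by
      rw [Finset.prod_const]
      apply pow_le_pow_right₀ hKc1
      have : s₁ ⊆ Finset.range (m₀+1) := by
        intro p hp
        rw [Finset.mem_range, Nat.lt_succ_iff]
        exact (Finset.mem_filter.mp hp).2
      exact (Finset.card_le_card this).trans_eq (by simp)
    have hb2 : ∏ p ∈ s₂, Kc ≤ Real.sqrt n := by
      have step1 : ∏ p ∈ s₂, Kc ≤ ∏ p ∈ s₂, Real.sqrt p := by
        apply Finset.prod_le_prod (fun _ _ => by positivity)
        intro p hp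
        have hpm : m₀ < p := by
          have := (Finset.mem_filter.mp hp).2; omega
        have : Kc^2 ≤ (p:ℝ) := by
          calc Kc^2 ≤ (m₀:ℝ) := Nat.le_ceil _ |>.trans (le_refl _)
          _ ≤ (p:ℝ) := by exact_mod_cast hpm.le
        rw [show Real.sqrt p = Real.sqrt ((p:ℝ)) from rfl]
        nlinarith [Real.sq_sqrt (Nat.cast_nonneg p : (0:ℝ) ≤ p),
          Real.sqrt_nonneg (p:ℝ), hKc1]
      have hsq1 : ∀ p ∈ s, (1:ℝ) ≤ Real.sqrt p := by
        intro p hp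
        have hp2 : 2 ≤ p := (Nat.prime_of_mem_primeFactors hp).two_le
        rw [show (1:ℝ) = Real.sqrt 1 from (Real.sqrt_one).symm]
        apply Real.sqrt_le_sqrt
        exact_mod_cast Nat.one_le_iff_ne_zero.mpr (by omega)
      have step2 : ∏ p ∈ s₂, Real.sqrt p ≤ ∏ p ∈ s, Real.sqrt p := by
        rw [← Finset.prod_filter_mul_prod_filter_not s (fun p => p ≤ m₀) (fun p => Real.sqrt p)]
        rw [← hs₁, ← hs₂]
        have h1le : (1:ℝ) ≤ ∏ p ∈ s₁, Real.sqrt p := by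
          rw [show (1:ℝ) = ∏ _p ∈ s₁, (1:ℝ) from (Finset.prod_const_one).symm]
          exact Finset.prod_le_prod (fun _ _ => zero_le_one)
            (fun p hp => hsq1 p (Finset.mem_filter.mp hp).1)
        have h2nn : (0:ℝ) ≤ ∏ p ∈ s₂, Real.sqrt p :=
          Finset.prod_nonneg (fun p _ => Real.sqrt_nonneg _)
        nlinarith
      have step3 : ∏ p ∈ s, Real.sqrt p ≤ Real.sqrt n := by
        rw [prod_sqrt_nat]
        apply Real.sqrt_le_sqrt
        have hdvd : (∏ p ∈ s, p) ∣ n := Nat.prod_primeFactors_dvd n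
        have := Nat.le_of_dvd (Nat.pos_of_ne_zero hn) hdvd
        calc (∏ p ∈ s, (p:ℝ)) = ((∏ p ∈ s, p : ℕ) : ℝ) := by push_cast; ring
        _ ≤ (n:ℝ) := by exact_mod_cast this
      calc ∏ p ∈ s₂, Kc ≤ ∏ p ∈ s₂, Real.sqrt p := step1
      _ ≤ ∏ p ∈ s, Real.sqrt p := step2
      _ ≤ Real.sqrt n := step3
    calc ∏ p ∈ s, Kc = (∏ p ∈ s₁, Kc) * ∏ p ∈ s₂, Kc := hsplit
    _ ≤ Kc^(m₀+1) * Real.sqrt n := by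
        apply mul_le_mul hb1 hb2 (Finset.prod_nonneg (fun _ _ => by positivity)) (by positivity)
  exact h1.trans h2

lemma alphaF_div_sq_summable {d : ℕ} (a : ℕ → Fin d → ℂ)
    (ha : ∀ p : ℕ, p.Prime → ∀ j : Fin d, ‖a p j‖ ≤ 1) :
    Summable (fun n : ℕ => ‖alphaF a n / (n:ℂ)^2‖) := by
  set B : ℝ := ((d:ℝ) * 2^d + 1)^(⌈((d:ℝ) * 2^d + 1)^2⌉₊ + 1) with hB
  have hB0 : 0 ≤ B := by positivity
  apply Summable.of_nonneg_of_le (fun n => norm_nonneg _)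
    (f := fun n : ℕ => B * (n:ℝ)^(-(3/2) : ℝ))
  · intro n
    rcases eq_or_ne n 0 with rfl | hn
    · simp [alphaF]
    · have hn0 : (0:ℝ) < n := by exact_mod_cast Nat.pos_of_ne_zero hn
      rw [norm_div, norm_pow, Complex.norm_natCast]
      rw [div_le_iff₀ (by positivity)]
      calc ‖alphaF a n‖ ≤ B * Real.sqrt n := alphaF_norm_le a ha hn
      _ = B * (n:ℝ)^(-(3/2):ℝ) * ((n:ℝ)^(2:ℕ)) := by
          rw [Real.sqrt_eq_rpow]
          rw [mul_assoc]
          congr 1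
          rw [← Real.rpow_natCast (n:ℝ) 2, ← Real.rpow_add hn0]
          norm_num
  · apply Summable.mul_left
    exact Real.summable_nat_rpow.mpr (by norm_num)

lemma alphaF_zero {d : ℕ} (a : ℕ → Fin d → ℂ) : alphaF a 0 = 0 := by
  simp [alphaF]

lemma alphaF_one {d : ℕ} (a : ℕ → Fin d → ℂ) : alphaF a 1 = 1 := by
  simp [alphaF]

lemma alphaF_mul {d : ℕ} (a : ℕ → Fin d → ℂ) {m n : ℕ} (h : m.Coprime n) :
    alphaF a (m * n) = alphaF a m * alphaF a n := by
  rcases eq_or_ne m 0 with rfl | hm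
  · have : n = 1 := by simpa [Nat.coprime_zero_left] using h
    subst this; simp [alphaF_zero, alphaF_one]
  rcases eq_or_ne n 0 with rfl | hn
  · have : m = 1 := by simpa [Nat.coprime_zero_right] using h
    subst this; simp [alphaF_zero, alphaF_one]
  rw [alphaF, alphaF, alphaF]
  rw [ArithmeticFunction.isMultiplicative_moebius.map_mul_of_coprime h]
  rw [Nat.primeFactors_mul hm hn, Finset.prod_union (h.disjoint_primeFactors)]
  push_cast
  ring

lemma alphaF_apply_prime {d : ℕ} (a : ℕ → Fin d → ℂ) {p : ℕ} (hp : p.Prime) :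
    alphaF a p = -gammaF a p := by
  rw [alphaF, ArithmeticFunction.moebius_apply_prime hp, Nat.Prime.primeFactors hp,
    Finset.prod_singleton]
  push_cast
  ring

lemma tsum_primepow {d : ℕ} (a : ℕ → Fin d → ℂ) {p : ℕ} (hp : p.Prime) :
    ∑' e : ℕ, alphaF a (p^e) / ((p^e : ℕ):ℂ)^2 = 1 - gammaF a p / ((p:ℕ):ℂ)^2 := by
  rw [tsum_eq_sum (s := {0, 1}) ?_]
  · rw [Finset.sum_pair (by norm_num)]
    rw [pow_zero, pow_one, alphaF_one, alphaF_apply_prime a hp]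
    push_cast
    ring
  · intro e he
    simp only [Finset.mem_insert, Finset.mem_singleton] at he
    push_neg at he
    obtain ⟨h0, h1⟩ := he
    rw [alphaF, ArithmeticFunction.moebius_apply_prime_pow hp h0, if_neg h1]
    simp

lemma euler_identity {d : ℕ} (a : ℕ → Fin d → ℂ)
    (ha : ∀ p : ℕ, p.Prime → ∀ j : Fin d, ‖a p j‖ ≤ 1) :
    ∏' p : Nat.Primes, (1 - gammaF a (p:ℕ) / ((p:ℕ):ℂ)^2)
      = ∑' n : ℕ, alphaF a n / (n:ℂ)^2 := by
  have hf1 : (fun n : ℕ => alphaF a n / (n:ℂ)^2) 1 = 1 := by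
    simp [alphaF_one]
  have hmul : ∀ {m n : ℕ}, m.Coprime n →
      (fun n : ℕ => alphaF a n / (n:ℂ)^2) (m * n)
        = (fun n : ℕ => alphaF a n / (n:ℂ)^2) m * (fun n : ℕ => alphaF a n / (n:ℂ)^2) n := by
    intro m n h
    simp only
    rw [alphaF_mul a h]
    push_cast
    ring
  have hf0 : (fun n : ℕ => alphaF a n / (n:ℂ)^2) 0 = 0 := by
    simp [alphaF_zero]
  have hP := (EulerProduct.eulerProduct_hasProd hf1 hmul (alphaF_div_sq_summable a ha) hf0).tprod_eq
  rw [← hP]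
  apply tprod_congr
  intro p
  have := tsum_primepow a p.prop
  rw [← this]

lemma nat_div_bounds (M n : ℕ) (hn : 0 < n) :
    ((M/n : ℕ) : ℝ) * n ≤ M ∧ (M:ℝ) + 1 ≤ ((M/n : ℕ) : ℝ) * n + n := by
  have h1 : M / n * n ≤ M := Nat.div_mul_le_self M n
  have e1 : n * (M/n) + M % n = M := Nat.div_add_mod M n
  have e2 : M % n < n := Nat.mod_lt M hn
  have e3 : n * (M/n) = M/n * n := Nat.mul_comm _ _
  constructor
  · exact_mod_cast h1
  · have : M + 1 ≤ M/n * n + n := by linarith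
    exact_mod_cast this

lemma floor_div_of_mem_Ioo {M n : ℕ} (hn : 0 < n) {x : ℝ} (h1 : (M:ℝ) < x)
    (h2 : x < (M:ℝ) + 1) : ⌊x / (n:ℝ)⌋ = ((M/n : ℕ) : ℤ) := by
  have hn0 : (0:ℝ) < n := by exact_mod_cast hn
  obtain ⟨hb1, hb2⟩ := nat_div_bounds M n hn
  rw [Int.floor_eq_iff]
  rw [Int.cast_natCast]
  constructor
  · rw [le_div_iff₀ hn0]; linarith
  · rw [div_lt_iff₀ hn0]; linarith

lemma not_int_of_mem_Ioo {M n : ℕ} (hn : 0 < n) {x : ℝ} (h1 : (M:ℝ) < x)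
    (h2 : x < (M:ℝ) + 1) : ¬ ∃ k : ℤ, x / (n:ℝ) = (k:ℝ) := by
  rintro ⟨k, hk⟩
  have hn0 : (0:ℝ) < n := by exact_mod_cast hn
  have hx : x = ((n * k : ℤ) : ℝ) := by
    push_cast
    field_simp at hk
    linarith [hk]
  rw [hx] at h1 h2
  have hh1 : (M:ℤ) < n * k := by exact_mod_cast h1
  have hh2 : (n * k : ℤ) < M + 1 := by exact_mod_cast h2
  omega

lemma saw_of_mem_Ioo {M n : ℕ} (hn : 0 < n) {x : ℝ} (h1 : (M:ℝ) < x)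
    (h2 : x < (M:ℝ) + 1) :
    saw (x / n) = 1/2 + ((M/n : ℕ) : ℝ) - x / n := by
  rw [saw, if_neg (not_int_of_mem_Ioo hn h1 h2), Int.fract,
    floor_div_of_mem_Ioo hn h1 h2, Int.cast_natCast]
  ring

lemma floor_nat_div (N n : ℕ) (hn : 0 < n) : ⌊(N:ℝ) / (n:ℝ)⌋ = ((N/n : ℕ) : ℤ) := by
  have hn0 : (0:ℝ) < n := by exact_mod_cast hn
  obtain ⟨hb1, hb2⟩ := nat_div_bounds N n hn
  rw [Int.floor_eq_iff]
  rw [Int.cast_natCast]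
  constructor
  · rw [le_div_iff₀ hn0]; linarith
  · rw [div_lt_iff₀ hn0]; linarith

lemma saw_succ_div {M n : ℕ} (hn : 0 < n) :
    saw (((M:ℝ)+1) / n) =
      ((1/2 + ((M/n : ℕ) : ℝ)) + (1/2 + (((M+1)/n : ℕ) : ℝ)))/2 - ((M:ℝ)+1)/n := by
  have hn0 : (0:ℝ) < n := by exact_mod_cast hn
  have hcast : ((M:ℝ)+1) = ((M+1 : ℕ):ℝ) := by push_cast; ring
  by_cases hdvd : n ∣ M + 1
  · have hq : ((M+1)/n) * n = M + 1 := Nat.div_mul_cancel hdvd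
    have hq1 : 1 ≤ (M+1)/n := Nat.one_le_div_iff hn |>.mpr (Nat.le_of_dvd (by omega) hdvd)
    have hMn : M/n = (M+1)/n - 1 := by
      have := Nat.succ_div (a := M) (b := n)
      rw [if_pos hdvd] at this
      omega
    have hint : ((M:ℝ)+1)/n = (((M+1)/n : ℕ) : ℝ) := by
      rw [div_eq_iff (ne_of_gt hn0)]
      have hqr : (((M+1)/n : ℕ) : ℝ) * n = ((M+1:ℕ):ℝ) := by exact_mod_cast congrArg (Nat.cast (R:=ℝ)) hq
      rw [hcast, ← hqr]
    rw [saw, if_pos ⟨((M+1)/n : ℕ), by rw [hint]; exact_mod_cast rfl⟩]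
    rw [hint, hMn]
    have hc2 : (((M+1)/n - 1 : ℕ) : ℝ) = (((M+1)/n : ℕ) : ℝ) - 1 := by
      rw [Nat.cast_sub hq1]
      norm_num
    rw [hc2]
    ring
  · have hMn : (M+1)/n = M/n := by
      have := Nat.succ_div (a := M) (b := n)
      rw [if_neg hdvd] at this
      omega
    have hni : ¬ ∃ k : ℤ, ((M:ℝ)+1)/n = (k:ℝ) := by
      rintro ⟨k, hk⟩
      apply hdvd
      rw [div_eq_iff (ne_of_gt hn0)] at hk
      have h2 : ((M+1 : ℕ) : ℤ) = n * k := by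
        have : ((M+1:ℕ):ℝ) = ((n * k : ℤ):ℝ) := by rw [← hcast, hk]; push_cast; ring
        exact_mod_cast this
      have hk0 : 0 ≤ k := by
        by_contra hneg
        push_neg at hneg
        have hnz : (0:ℤ) < n := by exact_mod_cast hn
        nlinarith [h2, Int.ofNat_nonneg (M+1)]
      refine ⟨k.toNat, ?_⟩
      rw [← Int.toNat_of_nonneg hk0] at h2
      exact_mod_cast h2
    rw [saw, if_neg hni, Int.fract, hcast, floor_nat_div (M+1) n hn, hMn,
      Int.cast_natCast]
    ring


/-- With the Euler-product setup, `R(x,F) = E₂(x,F) - x f₁(x,F)` satisfies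
`R(x,F) = -∫₀ˣ f₁(t,F) dt` for all `x > 0`. -/
theorem R_eq_neg_integral {d : ℕ} (a : ℕ → Fin d → ℂ)
    (ha : ∀ p : ℕ, p.Prime → ∀ j : Fin d, ‖a p j‖ ≤ 1)
    (hconv : ∃ l : ℂ, Tendsto (fun N : ℕ => ∑ n ∈ Finset.Icc 1 N, alphaF a n / (n : ℂ))
      atTop (𝓝 l))
    (C : ℂ)
    (hC : C = (1/2 : ℂ) * ∏' p : Nat.Primes, (1 - gammaF a (p : ℕ) / ((p : ℕ) : ℂ) ^ 2))
    (E : ℝ → ℂ)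
    (hE : ∀ x : ℝ, E x =
      ∑ n ∈ Finset.Icc 1 ⌊x⌋₊, (n : ℂ) * ∑ m ∈ n.divisors, alphaF a m / (m : ℂ) -
        C * (x : ℂ) ^ 2)
    (E₂ : ℝ → ℂ)
    (hE₂ : ∀ x : ℝ, (¬ ∃ N : ℕ, 0 < N ∧ x = (N : ℝ)) → E₂ x = E x)
    (hE₂int : ∀ N : ℕ, 0 < N → ∃ Lp Lm : ℂ,
      Tendsto E (nhdsWithin (N : ℝ) (Set.Ioi (N : ℝ))) (𝓝 Lp) ∧
      Tendsto E (nhdsWithin (N : ℝ) (Set.Iio (N : ℝ))) (𝓝 Lm) ∧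
      E₂ (N : ℝ) = (Lm + Lp) / 2)
    (f₁ : ℝ → ℂ)
    (hf₁ : ∀ x : ℝ, Tendsto
      (fun N : ℕ => ∑ n ∈ Finset.Icc 1 N, (alphaF a n / (n : ℂ)) * ((saw (x / n) : ℝ) : ℂ))
      atTop (𝓝 (f₁ x))) :
    ∀ x : ℝ, 0 < x → E₂ x - (x : ℂ) * f₁ x = -∫ t in (0:ℝ)..x, f₁ t := by
  classical
  have hQsum : Summable (fun n : ℕ => alphaF a n / (n:ℂ)^2) :=
    (alphaF_div_sq_summable a ha).of_norm
  set Q : ℂ := ∑' n : ℕ, alphaF a n / (n:ℂ)^2 with hQdef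
  have hQC : Q = 2 * C := by
    rw [hQdef, ← euler_identity a ha, hC]; ring
  have hQtend : Tendsto (fun K : ℕ => ∑ n ∈ Finset.Icc 1 K, alphaF a n / (n:ℂ)^2)
      atTop (𝓝 Q) := by
    have h2 : Tendsto (fun K : ℕ => ∑ n ∈ Finset.range (K+1), alphaF a n / (n:ℂ)^2)
        atTop (𝓝 Q) := hQsum.hasSum.tendsto_sum_nat.comp (tendsto_add_atTop_nat 1)
    apply h2.congr
    intro K
    symm
    apply Finset.sum_subset
    · intro n hn; rw [Finset.mem_Icc] at hn; rw [Finset.mem_range]; omega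
    · intro n hn hnotin
      have hn0 : n = 0 := by
        rw [Finset.mem_range] at hn; rw [Finset.mem_Icc] at hnotin; omega
      subst hn0; simp [alphaF_zero]
  -- partial sums are affine on (M, M+1)
  have hSK : ∀ (M K : ℕ) (x : ℝ), (M:ℝ) < x → x < (M:ℝ)+1 →
      ∑ n ∈ Finset.Icc 1 K, (alphaF a n / (n:ℂ)) * ((saw (x / n) : ℝ) : ℂ)
        = (∑ n ∈ Finset.Icc 1 K, (alphaF a n / (n:ℂ)) * (1/2 + ((M/n : ℕ) : ℂ)))
          - (x:ℂ) * ∑ n ∈ Finset.Icc 1 K, alphaF a n / (n:ℂ)^2 := by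
    intro M K x h1 h2
    rw [Finset.mul_sum, ← Finset.sum_sub_distrib]
    apply Finset.sum_congr rfl
    intro n hn
    have hn1 : 1 ≤ n := (Finset.mem_Icc.mp hn).1
    have hnC : ((n:ℕ):ℂ) ≠ 0 := Nat.cast_ne_zero.mpr (by omega)
    rw [saw_of_mem_Ioo (show 0 < n by omega) h1 h2]
    push_cast
    field_simp
  obtain ⟨A, hA⟩ : ∃ A : ℕ → ℂ,
      ∀ M : ℕ, A M = f₁ ((M:ℝ) + 1/2) + (((M:ℝ) + 1/2 : ℝ) : ℂ) * Q :=
    ⟨fun M => f₁ ((M:ℝ) + 1/2) + (((M:ℝ) + 1/2 : ℝ) : ℂ) * Q, fun _ => rfl⟩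
  have hPtend : ∀ M : ℕ, Tendsto
      (fun K => ∑ n ∈ Finset.Icc 1 K, (alphaF a n / (n:ℂ)) * (1/2 + ((M/n:ℕ) : ℂ)))
      atTop (𝓝 (A M)) := by
    intro M
    have hx1 : (M:ℝ) < (M:ℝ)+1/2 := by linarith
    have hx2 : (M:ℝ)+1/2 < (M:ℝ)+1 := by linarith
    have he : ∀ K : ℕ, ∑ n ∈ Finset.Icc 1 K, (alphaF a n / (n:ℂ)) * (1/2 + ((M/n:ℕ) : ℂ))
        = (∑ n ∈ Finset.Icc 1 K, (alphaF a n / (n:ℂ)) * ((saw (((M:ℝ)+1/2) / n) : ℝ) : ℂ))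
          + (((M:ℝ)+1/2 : ℝ):ℂ) * ∑ n ∈ Finset.Icc 1 K, alphaF a n / (n:ℂ)^2 := by
      intro K
      rw [hSK M K ((M:ℝ)+1/2) hx1 hx2]
      ring
    have ht : Tendsto (fun K : ℕ =>
        (∑ n ∈ Finset.Icc 1 K, (alphaF a n / (n:ℂ)) * ((saw (((M:ℝ)+1/2) / n) : ℝ) : ℂ))
          + (((M:ℝ)+1/2 : ℝ):ℂ) * ∑ n ∈ Finset.Icc 1 K, alphaF a n / (n:ℂ)^2)
        atTop (𝓝 (A M)) := by
      rw [hA M]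
      exact (hf₁ ((M:ℝ)+1/2)).add (tendsto_const_nhds.mul hQtend)
    exact ht.congr (fun K => (he K).symm)
  have haff : ∀ (M : ℕ) (x : ℝ), (M:ℝ) < x → x < (M:ℝ)+1 →
      f₁ x = A M - (x:ℂ) * Q := by
    intro M x h1 h2
    refine tendsto_nhds_unique (hf₁ x) ?_
    have ht : Tendsto (fun K : ℕ =>
        (∑ n ∈ Finset.Icc 1 K, (alphaF a n / (n:ℂ)) * (1/2 + ((M/n:ℕ) : ℂ)))
          - (x:ℂ) * ∑ n ∈ Finset.Icc 1 K, alphaF a n / (n:ℂ)^2) atTop (𝓝 (A M - (x:ℂ)*Q)) :=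
      (hPtend M).sub (tendsto_const_nhds.mul hQtend)
    exact ht.congr (fun K => (hSK M K x h1 h2).symm)
  have hfmid : ∀ M : ℕ, f₁ ((M:ℝ)+1/2) = A M - (((M:ℝ)+1/2 : ℝ):ℂ) * Q := by
    intro M
    exact haff M ((M:ℝ)+1/2) (by linarith) (by linarith)
  have hjump : ∀ M : ℕ, A (M+1) - A M = ∑ m ∈ (M+1).divisors, alphaF a m / (m:ℂ) := by
    intro M
    have hconst : ∀ K : ℕ, M+1 ≤ K →
        (∑ n ∈ Finset.Icc 1 K, (alphaF a n / (n:ℂ)) * (1/2 + (((M+1)/n:ℕ) : ℂ)))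
          - (∑ n ∈ Finset.Icc 1 K, (alphaF a n / (n:ℂ)) * (1/2 + ((M/n:ℕ) : ℂ)))
        = ∑ m ∈ (M+1).divisors, alphaF a m / (m:ℂ) := by
      intro K hK
      rw [← Finset.sum_sub_distrib]
      have hterm : ∀ n ∈ Finset.Icc 1 K,
          (alphaF a n / (n:ℂ)) * (1/2 + (((M+1)/n:ℕ) : ℂ))
            - (alphaF a n / (n:ℂ)) * (1/2 + ((M/n:ℕ) : ℂ))
          = if n ∣ M+1 then alphaF a n / (n:ℂ) else 0 := by
        intro n hn
        by_cases hd : n ∣ M+1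
        · rw [if_pos hd]
          have hdiv : (M+1)/n = M/n + 1 := by rw [Nat.succ_div, if_pos hd]
          rw [hdiv]
          push_cast
          ring
        · rw [if_neg hd]
          have hdiv : (M+1)/n = M/n := by rw [Nat.succ_div, if_neg hd, Nat.add_zero]
          rw [hdiv]
          ring
      rw [Finset.sum_congr rfl hterm, ← Finset.sum_filter]
      apply Finset.sum_congr ?_ (fun _ _ => rfl)
      ext m
      simp only [Finset.mem_filter, Finset.mem_Icc, Nat.mem_divisors]
      constructor
      · rintro ⟨⟨hm1, hm2⟩, h3⟩; exact ⟨h3, by omega⟩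
      · rintro ⟨h3, -⟩
        have hm1 : m ≤ M+1 := Nat.le_of_dvd (by omega) h3
        have hm0 : m ≠ 0 := by
          rintro rfl
          have := Nat.eq_zero_of_zero_dvd h3
          omega
        exact ⟨⟨by omega, by omega⟩, h3⟩
    have hev : (fun _ : ℕ => ∑ m ∈ (M+1).divisors, alphaF a m / (m:ℂ)) =ᶠ[atTop]
        (fun K => (∑ n ∈ Finset.Icc 1 K, (alphaF a n / (n:ℂ)) * (1/2 + (((M+1)/n:ℕ) : ℂ)))
          - (∑ n ∈ Finset.Icc 1 K, (alphaF a n / (n:ℂ)) * (1/2 + ((M/n:ℕ) : ℂ)))) := by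
      rw [Filter.eventuallyEq_iff_exists_mem]
      exact ⟨{K | M+1 ≤ K}, Filter.mem_atTop (M+1), fun K hK => (hconst K hK).symm⟩
    exact tendsto_nhds_unique ((hPtend (M+1)).sub (hPtend M))
      (Filter.Tendsto.congr' hev tendsto_const_nhds)
  have hfint : ∀ M : ℕ, f₁ ((M:ℝ)+1) = (A M + A (M+1))/2 - (((M:ℝ)+1 : ℝ):ℂ) * Q := by
    intro M
    refine tendsto_nhds_unique (hf₁ ((M:ℝ)+1)) ?_
    have key : ∀ K : ℕ,
        ∑ n ∈ Finset.Icc 1 K, (alphaF a n / (n:ℂ)) * ((saw (((M:ℝ)+1) / n) : ℝ) : ℂ)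
        = ((∑ n ∈ Finset.Icc 1 K, (alphaF a n / (n:ℂ)) * (1/2 + ((M/n:ℕ) : ℂ)))
            + (∑ n ∈ Finset.Icc 1 K, (alphaF a n / (n:ℂ)) * (1/2 + (((M+1)/n:ℕ) : ℂ))))/2
          - (((M:ℝ)+1:ℝ):ℂ) * ∑ n ∈ Finset.Icc 1 K, alphaF a n / (n:ℂ)^2 := by
      intro K
      rw [Finset.mul_sum, ← Finset.sum_add_distrib, Finset.sum_div, ← Finset.sum_sub_distrib]
      apply Finset.sum_congr rfl
      intro n hn
      have hn1 : 1 ≤ n := (Finset.mem_Icc.mp hn).1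
      have hnC : ((n:ℕ):ℂ) ≠ 0 := Nat.cast_ne_zero.mpr (by omega)
      rw [saw_succ_div (show 0 < n by omega)]
      push_cast
      field_simp
    have ht : Tendsto (fun K : ℕ =>
        ((∑ n ∈ Finset.Icc 1 K, (alphaF a n / (n:ℂ)) * (1/2 + ((M/n:ℕ) : ℂ)))
            + (∑ n ∈ Finset.Icc 1 K, (alphaF a n / (n:ℂ)) * (1/2 + (((M+1)/n:ℕ) : ℂ))))/2
          - (((M:ℝ)+1:ℝ):ℂ) * ∑ n ∈ Finset.Icc 1 K, alphaF a n / (n:ℂ)^2)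
        atTop (𝓝 ((A M + A (M+1))/2 - (((M:ℝ)+1 : ℝ):ℂ) * Q)) :=
      (((hPtend M).add (hPtend (M+1))).div_const 2).sub (tendsto_const_nhds.mul hQtend)
    exact ht.congr (fun K => (key K).symm)
  -- integration
  have hne1 : ∀ c : ℝ, ∀ᵐ t : ℝ, t ≠ c := by
    intro c
    have : (MeasureTheory.volume : MeasureTheory.Measure ℝ) {c} = 0 := Real.volume_singleton
    rw [MeasureTheory.ae_iff]
    simpa using this
  have hgc : ∀ M : ℕ, Continuous (fun t : ℝ => A M - (t:ℂ) * Q) := by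
    intro M
    exact continuous_const.sub (Complex.continuous_ofReal.mul continuous_const)
  have hfII : ∀ (M : ℕ) (u v : ℝ), (M:ℝ) ≤ u → u ≤ v → v ≤ (M:ℝ)+1 →
      IntervalIntegrable f₁ MeasureTheory.volume u v := by
    intro M u v hu huv hv
    apply ((hgc M).intervalIntegrable u v).congr_ae
    have h0 := MeasureTheory.ae_restrict_of_ae (μ := MeasureTheory.volume)
      (s := Set.uIoc u v) (hne1 ((M:ℝ)+1))
    have h1 := MeasureTheory.ae_restrict_mem (μ := MeasureTheory.volume)
      (measurableSet_uIoc (a := u) (b := v))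
    filter_upwards [h0, h1] with t ht1 ht2
    rw [Set.uIoc_of_le huv] at ht2
    obtain ⟨htu, htv⟩ := ht2
    exact (haff M t (lt_of_le_of_lt hu htu) (lt_of_le_of_ne (htv.trans hv) ht1)).symm
  have hint1 : ∀ (M : ℕ) (u v : ℝ), (M:ℝ) ≤ u → u ≤ v → v ≤ (M:ℝ)+1 →
      ∫ t in u..v, f₁ t = A M * ((v:ℂ) - (u:ℂ)) - Q * (((v^2 - u^2)/2 : ℝ) : ℂ) := by
    intro M u v hu huv hv
    have hcongr : ∫ t in u..v, f₁ t = ∫ t in u..v, (A M - (t:ℂ) * Q) := by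
      apply intervalIntegral.integral_congr_ae
      filter_upwards [hne1 ((M:ℝ)+1)] with t ht1 ht2
      rw [Set.uIoc_of_le huv] at ht2
      obtain ⟨htu, htv⟩ := ht2
      exact haff M t (lt_of_le_of_lt hu htu) (lt_of_le_of_ne (htv.trans hv) ht1)
    rw [hcongr]
    rw [intervalIntegral.integral_sub (g := fun t : ℝ => (t:ℂ) * Q) (intervalIntegrable_const)
      ((Complex.continuous_ofReal.mul continuous_const).intervalIntegrable u v)]
    rw [intervalIntegral.integral_const]
    have hmul : ∫ t in u..v, (t:ℂ) * Q = (((v^2 - u^2)/2 : ℝ) : ℂ) * Q := by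
      rw [intervalIntegral.integral_mul_const]
      congr 1
      rw [show (fun t : ℝ => (t:ℂ)) = (fun t : ℝ => ((id t : ℝ) : ℂ)) from rfl]
      rw [intervalIntegral.integral_ofReal]
      norm_num [integral_id]
    rw [hmul, Complex.real_smul]
    push_cast
    ring
  have hJ : ∀ M : ℕ, IntervalIntegrable f₁ MeasureTheory.volume 0 (M:ℝ) ∧
      (∫ t in (0:ℝ)..(M:ℝ), f₁ t) = ∑ j ∈ Finset.range M, f₁ ((j:ℝ)+1/2) := by
    intro M
    induction M with
    | zero =>
      constructor
      · simpa using hfII 0 0 0 (le_refl 0) (le_refl 0) (by norm_num)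
      · simp
    | succ M ih =>
      have hstep : IntervalIntegrable f₁ MeasureTheory.volume (M:ℝ) ((M:ℝ)+1) :=
        hfII M (M:ℝ) ((M:ℝ)+1) (le_refl _) (by linarith) (le_refl _)
      have hcast : ((M+1:ℕ):ℝ) = (M:ℝ)+1 := by push_cast; ring
      have hII : IntervalIntegrable f₁ MeasureTheory.volume 0 ((M:ℝ)+1) :=
        ih.1.trans hstep
      have hadd := intervalIntegral.integral_add_adjacent_intervals ih.1 hstep
      have hval := hint1 M (M:ℝ) ((M:ℝ)+1) (le_refl _) (by linarith) (le_refl _)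
      have hmidv : A M * (((M:ℝ)+1 :ℂ) - ((M:ℝ):ℂ)) - Q * (((((M:ℝ)+1)^2 - (M:ℝ)^2)/2 : ℝ) : ℂ)
          = f₁ ((M:ℝ)+1/2) := by
        rw [hfmid M]
        push_cast
        ring
      constructor
      · rw [hcast]; exact hII
      · rw [hcast, ← hadd, ih.2, Finset.sum_range_succ]
        congr 1
        rw [hval]
        rw [← hmidv]
        push_cast
        ring_nf
  have hP : ∀ M : ℕ, (∑ n ∈ Finset.Icc 1 M, (n:ℂ) * ∑ m ∈ n.divisors, alphaF a m / (m:ℂ))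
      = -(∑ j ∈ Finset.range M, f₁ ((j:ℝ)+1/2))
      + (M:ℂ) * A M - Q * (M:ℂ)^2/2 := by
    intro M
    induction M with
    | zero => simp [hA 0]
    | succ M ih =>
      have hstep : (∑ n ∈ Finset.Icc 1 (M+1), (n:ℂ) * ∑ m ∈ n.divisors, alphaF a m / (m:ℂ))
          = (∑ n ∈ Finset.Icc 1 M, (n:ℂ) * ∑ m ∈ n.divisors, alphaF a m / (m:ℂ))
            + ((M+1:ℕ):ℂ) * ∑ m ∈ (M+1).divisors, alphaF a m/(m:ℂ) :=
        Finset.sum_Icc_succ_top (by omega) _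
      rw [hstep, ih, Finset.sum_range_succ, ← hjump M, hfmid M]
      push_cast
      ring
  -- main conclusion
  intro x hx
  by_cases hnat : ∃ N : ℕ, 0 < N ∧ x = (N:ℝ)
  · obtain ⟨N, hN0, rfl⟩ := hnat
    obtain ⟨M, rfl⟩ : ∃ M, N = M+1 := ⟨N-1, by omega⟩
    obtain ⟨Lp, Lm, htp, htm, hE2N⟩ := hE₂int (M+1) hN0
    have hcast : ((M+1:ℕ):ℝ) = (M:ℝ)+1 := by push_cast; ring
    have hLm : Lm = (∑ n ∈ Finset.Icc 1 M, (n:ℂ) * ∑ m ∈ n.divisors, alphaF a m / (m:ℂ))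
        - C * ((((M+1:ℕ):ℝ)):ℂ)^2 := by
      have hmem : Set.Ioo ((M:ℝ)) (((M+1:ℕ)):ℝ) ∈ nhdsWithin (((M+1:ℕ)):ℝ) (Set.Iio (((M+1:ℕ)):ℝ)) := by
        apply Ioo_mem_nhdsLT_of_mem
        constructor
        · rw [hcast]; linarith
        · exact le_refl _
      have hEeq : ∀ y ∈ Set.Ioo ((M:ℝ)) (((M+1:ℕ)):ℝ), E y = (∑ n ∈ Finset.Icc 1 M, (n:ℂ) * ∑ m ∈ n.divisors, alphaF a m / (m:ℂ)) - C*(y:ℂ)^2 := by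
        intro y hy
        have hfl : ⌊y⌋₊ = M := by
          rw [Nat.floor_eq_iff (le_trans (Nat.cast_nonneg M) hy.1.le)]
          exact ⟨hy.1.le, by rw [← hcast]; exact hy.2⟩
        rw [hE y, hfl]
      have hcont : Tendsto (fun y : ℝ => (∑ n ∈ Finset.Icc 1 M, (n:ℂ) * ∑ m ∈ n.divisors, alphaF a m / (m:ℂ)) - C*(y:ℂ)^2)
          (nhdsWithin (((M+1:ℕ)):ℝ) (Set.Iio (((M+1:ℕ)):ℝ)))
          (𝓝 ((∑ n ∈ Finset.Icc 1 M, (n:ℂ) * ∑ m ∈ n.divisors, alphaF a m / (m:ℂ)) - C * ((((M+1:ℕ):ℝ)):ℂ)^2)) := by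
        apply Filter.Tendsto.mono_left ?_ nhdsWithin_le_nhds
        exact Continuous.tendsto (continuous_const.sub
          (continuous_const.mul (Complex.continuous_ofReal.pow 2))) _
      have hEt : Tendsto E (nhdsWithin (((M+1:ℕ)):ℝ) (Set.Iio (((M+1:ℕ)):ℝ)))
          (𝓝 ((∑ n ∈ Finset.Icc 1 M, (n:ℂ) * ∑ m ∈ n.divisors, alphaF a m / (m:ℂ)) - C * ((((M+1:ℕ):ℝ)):ℂ)^2)) := by
        apply Filter.Tendsto.congr' ?_ hcont
        exact Filter.eventuallyEq_of_mem hmem (fun y hy => (hEeq y hy).symm)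
      exact tendsto_nhds_unique htm hEt
    have hLp : Lp = (∑ n ∈ Finset.Icc 1 (M+1), (n:ℂ) * ∑ m ∈ n.divisors, alphaF a m / (m:ℂ))
        - C * ((((M+1:ℕ):ℝ)):ℂ)^2 := by
      have hmem : Set.Ioo (((M+1:ℕ)):ℝ) ((((M+1:ℕ)):ℝ)+1) ∈
          nhdsWithin (((M+1:ℕ)):ℝ) (Set.Ioi (((M+1:ℕ)):ℝ)) := by
        apply Ioo_mem_nhdsGT_of_mem
        constructor
        · exact le_refl _
        · linarith
      have hEeq : ∀ y ∈ Set.Ioo (((M+1:ℕ)):ℝ) ((((M+1:ℕ)):ℝ)+1), E y = (∑ n ∈ Finset.Icc 1 (M+1), (n:ℂ) * ∑ m ∈ n.divisors, alphaF a m / (m:ℂ)) - C*(y:ℂ)^2 := by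
        intro y hy
        have hfl : ⌊y⌋₊ = M+1 := by
          rw [Nat.floor_eq_iff (le_trans (Nat.cast_nonneg (M+1)) hy.1.le)]
          exact ⟨hy.1.le, hy.2⟩
        rw [hE y, hfl]
      have hcont : Tendsto (fun y : ℝ => (∑ n ∈ Finset.Icc 1 (M+1), (n:ℂ) * ∑ m ∈ n.divisors, alphaF a m / (m:ℂ)) - C*(y:ℂ)^2)
          (nhdsWithin (((M+1:ℕ)):ℝ) (Set.Ioi (((M+1:ℕ)):ℝ)))
          (𝓝 ((∑ n ∈ Finset.Icc 1 (M+1), (n:ℂ) * ∑ m ∈ n.divisors, alphaF a m / (m:ℂ)) - C * ((((M+1:ℕ):ℝ)):ℂ)^2)) := by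
        apply Filter.Tendsto.mono_left ?_ nhdsWithin_le_nhds
        exact Continuous.tendsto (continuous_const.sub
          (continuous_const.mul (Complex.continuous_ofReal.pow 2))) _
      have hEt : Tendsto E (nhdsWithin (((M+1:ℕ)):ℝ) (Set.Ioi (((M+1:ℕ)):ℝ)))
          (𝓝 ((∑ n ∈ Finset.Icc 1 (M+1), (n:ℂ) * ∑ m ∈ n.divisors, alphaF a m / (m:ℂ)) - C * ((((M+1:ℕ):ℝ)):ℂ)^2)) := by
        apply Filter.Tendsto.congr' ?_ hcont
        exact Filter.eventuallyEq_of_mem hmem (fun y hy => (hEeq y hy).symm)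
      exact tendsto_nhds_unique htp hEt
    have hf1N : f₁ (((M+1:ℕ)):ℝ) = (A M + A (M+1))/2 - (((M:ℝ)+1 : ℝ):ℂ) * Q := by
      rw [hcast]; exact hfint M
    have hIN := (hJ (M+1)).2
    rw [hE2N, hLm, hLp, hf1N, hIN, hP M, hP (M+1)]
    simp only [Finset.sum_range_succ]
    rw [hfmid M, hQC]
    push_cast
    ring
  · obtain ⟨M, hMfloor⟩ : ∃ M : ℕ, ⌊x⌋₊ = M := ⟨⌊x⌋₊, rfl⟩
    have hM1 : (M:ℝ) ≤ x := by rw [← hMfloor]; exact Nat.floor_le hx.le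
    have hM2 : x < (M:ℝ)+1 := by rw [← hMfloor]; exact Nat.lt_floor_add_one x
    have hMlt : (M:ℝ) < x := by
      rcases lt_or_eq_of_le hM1 with h | h
      · exact h
      · exfalso
        have hM0 : 0 < M := by
          by_contra h0
          push_neg at h0
          have hM00 : M = 0 := by omega
          rw [hM00] at h
          norm_num at h
          linarith
        exact hnat ⟨M, hM0, h.symm⟩
    have hIeq : ∫ t in (0:ℝ)..x, f₁ t
        = (∑ j ∈ Finset.range M, f₁ ((j:ℝ)+1/2))
          + (A M * ((x:ℂ) - ((M:ℝ):ℂ)) - Q * (((x^2 - (M:ℝ)^2)/2 : ℝ):ℂ)) := by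
      rw [← intervalIntegral.integral_add_adjacent_intervals (hJ M).1
        (hfII M (M:ℝ) x (le_refl _) hM1 hM2.le)]
      rw [(hJ M).2, hint1 M (M:ℝ) x (le_refl _) hM1 hM2.le]
    rw [hE₂ x hnat, hE x, hMfloor, haff M x hMlt hM2, hIeq, hP M, hQC]
    push_cast
    ring
end

section
/- With α(n) ≪ n^ε, ∑α(n)/n convergent, f₁(x) = ∑_{n=1}^∞(α(n)/n)s(x/n) and g₁(x) = ∑_{n=1}^∞ α(n){x/n}({x/n}-1), we have for all x ≥ 1: ∫₀ˣ f₁(t) dt = -(1/2)g₁(x). -/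
open Filter Topology Classical

open MeasureTheory Set


lemma saw_measurable : Measurable saw := by
  unfold saw
  refine Measurable.ite ?_ measurable_const (measurable_const.sub measurable_fract)
  have : {x : ℝ | ∃ k : ℤ, x = (k:ℝ)} = Set.range ((↑) : ℤ → ℝ) := by
    ext x; simp [eq_comm]
  rw [this]
  exact (Set.countable_range _).measurableSet

lemma saw_norm_le (x : ℝ) : ‖saw x‖ ≤ 1/2 := by
  unfold saw
  split
  · simp
  · rw [Real.norm_eq_abs, abs_le]
    have h1 := Int.fract_nonneg x
    have h2 := Int.fract_lt_one x
    constructor <;> linarith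

lemma saw_ae_eq : saw =ᵐ[volume] (fun x => 1/2 - Int.fract x) := by
  have h : volume (Set.range ((↑) : ℤ → ℝ)) = 0 :=
    (Set.countable_range _).measure_zero _
  filter_upwards [MeasureTheory.measure_eq_zero_iff_ae_notMem.mp h] with x hx
  rw [saw, if_neg]
  rintro ⟨k, rfl⟩
  exact hx ⟨k, rfl⟩

lemma F_cont : Continuous (fun y : ℝ => -(1/2) * (Int.fract y * (Int.fract y - 1))) := by
  have : Continuous ((fun z : ℝ => -(1/2) * (z * (z - 1))) ∘ Int.fract) :=
    ContinuousOn.comp_fract'' (Continuous.continuousOn (by continuity)) (by norm_num)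
  exact this

lemma F_deriv (x : ℝ) : HasDerivWithinAt (fun y : ℝ => -(1/2) * (Int.fract y * (Int.fract y - 1)))
    (1/2 - Int.fract x) (Set.Ioi x) x := by
  set c : ℝ := (⌊x⌋ : ℝ) with hc
  have h1 : HasDerivAt (fun t : ℝ => t - c) 1 x := (hasDerivAt_id x).sub_const c
  have hP : HasDerivAt (fun t : ℝ => -(1/2) * ((t - c) * ((t - c) - 1)))
      (1/2 - Int.fract x) x := by
    have := ((h1.mul (h1.sub_const 1)).const_mul (-(1/2) : ℝ))
    refine this.congr_deriv ?_
    have : Int.fract x = x - c := rfl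
    rw [this]; ring
  refine hP.hasDerivWithinAt.congr_of_eventuallyEq ?_ ?_
  · filter_upwards [Ioo_mem_nhdsGT_of_mem ⟨le_refl x, Int.lt_floor_add_one x⟩] with t ht
    have hft : ⌊t⌋ = ⌊x⌋ := by
      rw [Int.floor_eq_iff]
      exact ⟨le_trans (Int.floor_le x) ht.1.le, by exact_mod_cast ht.2⟩
    show -(1/2) * (Int.fract t * (Int.fract t - 1)) = _
    rw [Int.fract, hft]
  · show -(1/2) * (Int.fract x * (Int.fract x - 1)) = _
    rfl

lemma intervalIntegrable_of_bound {E : Type*} [NormedAddCommGroup E] {f : ℝ → E} {a b : ℝ}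
    (hf : AEStronglyMeasurable f (volume.restrict (Set.uIoc a b)))
    (C : ℝ) (h : ∀ t, ‖f t‖ ≤ C) : IntervalIntegrable f volume a b := by
  rw [intervalIntegrable_iff]
  refine Integrable.mono' (g := fun _ => C) ?_ hf (Filter.Eventually.of_forall h)
  exact integrableOn_const measure_Ioc_lt_top.ne

lemma integral_saw (y : ℝ) (hy : 0 ≤ y) :
    ∫ t in (0:ℝ)..y, saw t = -(1/2) * (Int.fract y * (Int.fract y - 1)) := by
  have hint : IntervalIntegrable (fun t : ℝ => 1/2 - Int.fract t) volume 0 y := by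
    refine intervalIntegrable_of_bound ((measurable_const.sub measurable_fract).aestronglyMeasurable) 1 ?_
    intro t
    rw [Real.norm_eq_abs, abs_le]
    have h1 := Int.fract_nonneg t
    have h2 := Int.fract_lt_one t
    constructor <;> linarith
  have key := intervalIntegral.integral_eq_sub_of_hasDeriv_right_of_le hy
      F_cont.continuousOn (fun t _ => F_deriv t) hint
  have hcongr : ∫ t in (0:ℝ)..y, saw t = ∫ t in (0:ℝ)..y, (1/2 - Int.fract t) := by
    apply intervalIntegral.integral_congr_ae
    filter_upwards [saw_ae_eq] with t ht _
    exact ht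
  rw [hcongr, key]
  simp [Int.fract_zero]

lemma integral_saw_div (n : ℕ) (hn : 1 ≤ n) (x : ℝ) (hx : 0 ≤ x) :
    ∫ t in (0:ℝ)..x, saw (t / n) =
      (n : ℝ) * (-(1/2) * (Int.fract (x / n) * (Int.fract (x / n) - 1))) := by
  have hn0 : (n : ℝ) ≠ 0 := by positivity
  rw [intervalIntegral.integral_comp_div (f := saw) hn0, zero_div, smul_eq_mul,
    integral_saw _ (by positivity)]

/-- With `α(n) ≪ n^ε`, `∑ α(n)/n` convergent, `f₁(x) = ∑ (α(n)/n) s(x/n)` and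
`g₁(x) = ∑ α(n){x/n}({x/n}-1)`, we have `∫₀ˣ f₁(t) dt = -(1/2) g₁(x)` for `x ≥ 1`. -/
theorem integral_f1_eq_neg_half_g1 (α : ℕ → ℂ)
    (hgrow : ∀ ε : ℝ, 0 < ε → ∃ c : ℝ, ∀ n : ℕ, 1 ≤ n → ‖α n‖ ≤ c * (n : ℝ) ^ ε)
    (hα : ∃ l : ℂ, Tendsto (fun N : ℕ => ∑ n ∈ Finset.Icc 1 N, α n / (n : ℂ)) atTop (𝓝 l))
    (f₁ : ℝ → ℂ)
    (hf₁ : ∀ x : ℝ, Tendsto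
      (fun N : ℕ => ∑ n ∈ Finset.Icc 1 N, (α n / (n : ℂ)) * ((saw (x / n) : ℝ) : ℂ))
      atTop (𝓝 (f₁ x)))
    (g₁ : ℝ → ℂ)
    (hg₁ : ∀ x : ℝ, Tendsto
      (fun N : ℕ => ∑ n ∈ Finset.Icc 1 N,
        α n * ((Int.fract (x / n) : ℝ) : ℂ) * (((Int.fract (x / n) : ℝ) : ℂ) - 1))
      atTop (𝓝 (g₁ x))) :
    ∀ x : ℝ, 1 ≤ x → ∫ t in (0:ℝ)..x, f₁ t = -(1/2) * g₁ x := by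
  intro x hx
  have hx0 : (0:ℝ) ≤ x := by linarith
  set S : ℕ → ℝ → ℂ :=
    fun N t => ∑ n ∈ Finset.Icc 1 N, (α n / (n:ℂ)) * ((saw (t/n) : ℝ) : ℂ) with hS
  set A : ℕ → ℂ := fun N => ∑ n ∈ Finset.Icc 1 N, α n / (n:ℂ) with hA
  -- bound on partial sums of α n / n
  obtain ⟨l, hl⟩ := hα
  obtain ⟨Ca, hCa⟩ := hl.norm.bddAbove_range
  rw [mem_upperBounds] at hCa
  have hCa' : ∀ N, ‖A N‖ ≤ Ca := fun N => hCa _ ⟨N, rfl⟩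
  have hCa0 : 0 ≤ Ca := le_trans (norm_nonneg _) (hCa' 0)
  -- summability of ‖α n‖ / n²
  obtain ⟨c, hc⟩ := hgrow (1/2) (by norm_num)
  have hsum : Summable (fun n : ℕ => ‖α n‖ / (n:ℝ)^2) := by
    have hs : Summable (fun n : ℕ => c * ((n:ℝ) ^ ((3:ℝ)/2))⁻¹) :=
      (Real.summable_nat_rpow_inv.mpr (by norm_num)).mul_left c
    refine hs.of_nonneg_of_le (fun n => by positivity) (fun n => ?_)
    rcases Nat.eq_zero_or_pos n with rfl | hn
    · simp
    · have hn0 : (0:ℝ) < n := by exact_mod_cast hn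
      have h1 : ‖α n‖ / (n:ℝ)^2 ≤ c * (n:ℝ)^((1:ℝ)/2) / (n:ℝ)^2 := by
        gcongr
        exact hc n hn
      refine h1.trans (le_of_eq ?_)
      rw [mul_div_assoc]
      congr 1
      rw [← Real.rpow_natCast (n:ℝ) 2, ← Real.rpow_sub hn0, ← Real.rpow_neg hn0.le]
      congr 1
      norm_num
  set Cb : ℝ := ∑' n : ℕ, ‖α n‖ / (n:ℝ)^2 with hCbdef
  have hCb : ∀ s : Finset ℕ, ∑ n ∈ s, ‖α n‖ / (n:ℝ)^2 ≤ Cb :=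
    fun s => Summable.sum_le_tsum s (fun n _ => by positivity) hsum
  have hCb0 : 0 ≤ Cb := le_trans (by simp) (hCb ∅)
  set M : ℕ := ⌈x⌉₊ with hM
  -- saw formula for large n
  have hsaw : ∀ t : ℝ, 0 < t → t ≤ x → ∀ n : ℕ, M < n → saw (t / n) = 1/2 - t/n := by
    intro t ht htx n hn
    have hn0 : (0:ℝ) < n := by
      have : 0 < n := lt_of_le_of_lt (Nat.zero_le M) hn
      exact_mod_cast this
    have h1 : 0 < t / n := div_pos ht hn0
    have h2 : t / n < 1 := by
      rw [div_lt_one hn0]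
      calc t ≤ x := htx
        _ ≤ M := Nat.le_ceil x
        _ < n := by exact_mod_cast hn
    rw [saw, if_neg]
    · rw [Int.fract_eq_self.2 ⟨h1.le, h2⟩]
    · rintro ⟨k, hk⟩
      rw [hk] at h1 h2
      have hk1 : 0 < k := by exact_mod_cast h1
      have hk2 : k < 1 := by exact_mod_cast h2
      omega
  have hterm : ∀ (n : ℕ) (t : ℝ), ‖(α n / (n:ℂ)) * ((saw (t/n):ℝ):ℂ)‖ ≤ ‖α n‖ / n := by
    intro n t
    rw [norm_mul, norm_div, Complex.norm_natCast, Complex.norm_real]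
    have ha : (0:ℝ) ≤ ‖α n‖ / n := by positivity
    calc ‖α n‖ / n * ‖saw (t/n)‖ ≤ ‖α n‖ / n * (1/2) :=
          mul_le_mul_of_nonneg_left (saw_norm_le _) ha
      _ ≤ ‖α n‖ / n := by linarith
  set C₁ : ℝ := ∑ n ∈ Finset.Icc 1 M, ‖α n‖ / n with hC₁
  have hC₁0 : 0 ≤ C₁ := Finset.sum_nonneg (fun n _ => by positivity)
  set C : ℝ := C₁ + Ca + x * Cb with hC
  have icc_eq : ∀ K : ℕ, Finset.Icc 1 K = Finset.Ioc 0 K := fun K => Finset.Icc_add_one_left_eq_Ioc 0 K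
  -- uniform bound
  have hbound : ∀ N : ℕ, ∀ t ∈ Set.Ioc (0:ℝ) x, ‖S N t‖ ≤ C := by
    intro N t ht
    have hfirst : ∀ K : ℕ, K ≤ M → ‖S K t‖ ≤ C₁ := by
      intro K hKM
      calc ‖S K t‖ ≤ ∑ n ∈ Finset.Icc 1 K, ‖(α n / (n:ℂ)) * ((saw (t/n):ℝ):ℂ)‖ :=
            norm_sum_le _ _
        _ ≤ ∑ n ∈ Finset.Icc 1 K, ‖α n‖ / n := Finset.sum_le_sum (fun n _ => hterm n t)
        _ ≤ C₁ := Finset.sum_le_sum_of_subset_of_nonneg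
            (Finset.Icc_subset_Icc_right hKM) (fun n _ _ => by positivity)
    rcases le_or_gt N M with hNM | hMN
    · have := hfirst N hNM
      rw [hC]
      nlinarith
    · have hsplit : S N t = S M t + ∑ n ∈ Finset.Ioc M N, (α n/(n:ℂ)) * ((saw (t/n):ℝ):ℂ) := by
        rw [hS]
        simp only
        rw [icc_eq N, icc_eq M, ← Finset.sum_Ioc_consecutive _ (Nat.zero_le M) hMN.le]
      have h2 : ∑ n ∈ Finset.Ioc M N, (α n/(n:ℂ)) * ((saw (t/n):ℝ):ℂ)
          = (1/2 : ℂ) * (∑ n ∈ Finset.Ioc M N, α n/(n:ℂ))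
            - (t:ℂ) * ∑ n ∈ Finset.Ioc M N, α n/(n:ℂ)^2 := by
        rw [Finset.mul_sum, Finset.mul_sum, ← Finset.sum_sub_distrib]
        refine Finset.sum_congr rfl (fun n hn => ?_)
        rw [hsaw t ht.1 ht.2 n (Finset.mem_Ioc.mp hn).1]
        have hn0 : (n:ℂ) ≠ 0 := by
          have : 0 < n := lt_of_le_of_lt (Nat.zero_le M) (Finset.mem_Ioc.mp hn).1
          exact_mod_cast this.ne'
        push_cast
        field_simp
      have hQ : ‖∑ n ∈ Finset.Ioc M N, α n/(n:ℂ)‖ ≤ 2 * Ca := by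
        have he : ∑ n ∈ Finset.Ioc M N, α n/(n:ℂ) = A N - A M := by
          rw [hA]
          simp only
          rw [icc_eq N, icc_eq M, ← Finset.sum_Ioc_consecutive _ (Nat.zero_le M) hMN.le]
          ring
        rw [he]
        calc ‖A N - A M‖ ≤ ‖A N‖ + ‖A M‖ := norm_sub_le _ _
          _ ≤ 2 * Ca := by linarith [hCa' N, hCa' M]
      have hR : ‖∑ n ∈ Finset.Ioc M N, α n/(n:ℂ)^2‖ ≤ Cb := by
        calc ‖∑ n ∈ Finset.Ioc M N, α n/(n:ℂ)^2‖
            ≤ ∑ n ∈ Finset.Ioc M N, ‖α n/(n:ℂ)^2‖ := norm_sum_le _ _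
          _ = ∑ n ∈ Finset.Ioc M N, ‖α n‖ / (n:ℝ)^2 := by
              refine Finset.sum_congr rfl (fun n _ => ?_)
              rw [norm_div, norm_pow, Complex.norm_natCast]
          _ ≤ Cb := hCb _
      have h3 : ‖∑ n ∈ Finset.Ioc M N, (α n/(n:ℂ)) * ((saw (t/n):ℝ):ℂ)‖ ≤ Ca + x * Cb := by
        rw [h2]
        calc ‖(1/2 : ℂ) * (∑ n ∈ Finset.Ioc M N, α n/(n:ℂ))
              - (t:ℂ) * ∑ n ∈ Finset.Ioc M N, α n/(n:ℂ)^2‖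
            ≤ ‖(1/2 : ℂ) * (∑ n ∈ Finset.Ioc M N, α n/(n:ℂ))‖
              + ‖(t:ℂ) * ∑ n ∈ Finset.Ioc M N, α n/(n:ℂ)^2‖ := norm_sub_le _ _
          _ = (1/2) * ‖∑ n ∈ Finset.Ioc M N, α n/(n:ℂ)‖
              + |t| * ‖∑ n ∈ Finset.Ioc M N, α n/(n:ℂ)^2‖ := by
              rw [norm_mul, norm_mul, Complex.norm_real, Real.norm_eq_abs]
              norm_num
          _ ≤ (1/2) * (2 * Ca) + x * Cb := by
              gcongr
              rw [abs_of_pos ht.1]; exact ht.2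
          _ = Ca + x * Cb := by ring
      calc ‖S N t‖ ≤ ‖S M t‖ + ‖∑ n ∈ Finset.Ioc M N, (α n/(n:ℂ)) * ((saw (t/n):ℝ):ℂ)‖ := by
            rw [hsplit]; exact norm_add_le _ _
        _ ≤ C₁ + (Ca + x * Cb) := add_le_add (hfirst M le_rfl) h3
        _ = C := by rw [hC]; ring
  -- measurability
  have hmeas : ∀ N : ℕ, AEStronglyMeasurable (S N) (volume.restrict (Set.uIoc (0:ℝ) x)) := by
    intro N
    refine Measurable.aestronglyMeasurable ?_
    refine Finset.measurable_sum _ (fun n _ => ?_)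
    exact (Complex.measurable_ofReal.comp
      (saw_measurable.comp (measurable_id.div_const (n:ℝ)))).const_mul _
  have hIoc : Set.uIoc (0:ℝ) x = Set.Ioc 0 x := Set.uIoc_of_le hx0
  -- dominated convergence
  have hDC : Tendsto (fun N => ∫ t in (0:ℝ)..x, S N t) atTop (𝓝 (∫ t in (0:ℝ)..x, f₁ t)) := by
    refine intervalIntegral.tendsto_integral_filter_of_dominated_convergence (fun _ => C)
      (Eventually.of_forall hmeas)
      (Eventually.of_forall (fun N => Eventually.of_forall (fun t ht => ?_)))
      intervalIntegrable_const
      (Eventually.of_forall (fun t _ => hf₁ t))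
    exact hbound N t (hIoc ▸ ht)
  -- compute the integral of partial sums
  have hSint : ∀ N : ℕ, ∫ t in (0:ℝ)..x, S N t
      = -(1/2 : ℂ) * ∑ n ∈ Finset.Icc 1 N,
          α n * ((Int.fract (x/n):ℝ):ℂ) * (((Int.fract (x/n):ℝ):ℂ) - 1) := by
    intro N
    rw [hS]
    simp only
    rw [intervalIntegral.integral_finset_sum, Finset.mul_sum]
    · refine Finset.sum_congr rfl (fun n hn => ?_)
      have hn1 : 1 ≤ n := (Finset.mem_Icc.mp hn).1
      have hnR : ((n:ℝ)) ≠ 0 := by positivity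
      have hnC : (n:ℂ) ≠ 0 := by exact_mod_cast (Nat.cast_ne_zero (R := ℂ)).mpr (by omega)
      rw [intervalIntegral.integral_const_mul, intervalIntegral.integral_ofReal,
        integral_saw_div n hn1 x hx0]
      push_cast
      field_simp
    · intro n _
      refine intervalIntegrable_of_bound ?_ (‖α n‖ / n) (fun t => hterm n t)
      exact Measurable.aestronglyMeasurable ((Complex.measurable_ofReal.comp
        (saw_measurable.comp (measurable_id.div_const (n:ℝ)))).const_mul _)
  have hg : Tendsto (fun N => ∫ t in (0:ℝ)..x, S N t) atTop (𝓝 (-(1/2) * g₁ x)) := by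
    simp only [hSint]
    exact (hg₁ x).const_mul (-(1/2 : ℂ))
  exact tendsto_nhds_unique hDC hg
end

section
/- Let α : ℕ → ℂ satisfy α(n) ≪ n^ε for every ε > 0 and suppose ∑_{n=1}^∞ α(n)/n converges. Let f₁(x) = ∑_{n=1}^∞ (α(n)/n)s(x/n). Then for every x > 0 that is not an integer, f₁ is differentiable at x and f₁'(x) = -∑_{n=1}^∞ α(n)/n², i.e. the derivative is the constant -2C where C = (1/2)∑_{n=1}^∞ α(n)/n². -/
open Filter Topology Classical

lemma saw_eq_of_not_int {x : ℝ} (h : ¬∃ k : ℤ, x = (k : ℝ)) : saw x = 1/2 - Int.fract x := by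
  simp [saw, h]

lemma saw_hasDerivAt {t : ℝ} (ht : ¬∃ k : ℤ, t = (k : ℝ)) : HasDerivAt saw (-1) t := by
  have hne : ((⌊t⌋ : ℝ)) ≠ t := fun h => ht ⟨⌊t⌋, h.symm⟩
  have h1 : ((⌊t⌋ : ℝ)) < t := lt_of_le_of_ne (Int.floor_le t) hne
  have h2 : t < (⌊t⌋ : ℝ) + 1 := Int.lt_floor_add_one t
  have hlin : HasDerivAt (fun z : ℝ => 1/2 - z + (⌊t⌋ : ℝ)) (-1) t := by
    simpa using (((hasDerivAt_const t (1/2:ℝ)).sub (hasDerivAt_id t)).add_const ((⌊t⌋:ℝ)))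
  refine hlin.congr_of_eventuallyEq ?_
  filter_upwards [Ioo_mem_nhds h1 h2] with z hz
  obtain ⟨hz1, hz2⟩ := hz
  have hzni : ¬∃ k : ℤ, z = (k : ℝ) := by
    rintro ⟨k, rfl⟩
    have : ⌊t⌋ < k := by exact_mod_cast hz1
    have : k < ⌊t⌋ + 1 := by exact_mod_cast hz2
    omega
  have hfl : ⌊z⌋ = ⌊t⌋ := by
    rw [Int.floor_eq_iff]
    · exact ⟨le_of_lt hz1, hz2⟩
  rw [saw_eq_of_not_int hzni, Int.fract, hfl]
  ring

lemma saw_div_hasDerivAt (n : ℕ) (hn : 1 ≤ n) {x : ℝ} (hx : ¬∃ k : ℤ, x = (k : ℝ)) :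
    HasDerivAt (fun y : ℝ => saw (y / n)) (-(1/(n:ℝ))) x := by
  have hn0 : (n : ℝ) ≠ 0 := Nat.cast_ne_zero.mpr (by omega)
  have hxn : ¬∃ k : ℤ, x / n = (k : ℝ) := by
    rintro ⟨k, hk⟩
    refine hx ⟨(n : ℤ) * k, ?_⟩
    push_cast
    field_simp at hk
    linarith [hk]
  simpa [Function.comp_def] using (saw_hasDerivAt hxn).comp x ((hasDerivAt_id x).div_const (n:ℝ))

lemma sum_Icc_shift (b : ℕ → ℂ) (M : ℕ) :
    ∑ n ∈ Finset.Icc 1 M, b n = ∑ i ∈ Finset.range M, b (i+1) := by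
  rw [← Finset.Ico_add_one_right_eq_Icc, Finset.sum_Ico_eq_sum_range]
  simp [add_comm]

lemma sum_Icc_tendsto (b : ℕ → ℂ) (h : Summable (fun n => b (n+1))) :
    Tendsto (fun M : ℕ => ∑ n ∈ Finset.Icc 1 M, b n) atTop (𝓝 (∑' n, b (n+1))) := by
  exact h.hasSum.tendsto_sum_nat.congr fun M => (sum_Icc_shift b M).symm

lemma summable_a (α : ℕ → ℂ)
    (hgrow : ∀ ε : ℝ, 0 < ε → ∃ c : ℝ, ∀ n : ℕ, 1 ≤ n → ‖α n‖ ≤ c * (n : ℝ) ^ ε) :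
    Summable (fun n : ℕ => α (n+1) / ((n+1 : ℕ) : ℂ)^2) := by
  obtain ⟨c, hc⟩ := hgrow (1/2) (by norm_num)
  have hg : Summable (fun n : ℕ => c * ((n+1 : ℝ)) ^ (-(3/2) : ℝ)) := by
    have h1 : Summable (fun n : ℕ => ((n : ℝ)) ^ (-(3/2) : ℝ)) :=
      Real.summable_nat_rpow.mpr (by norm_num)
    have h2 := (summable_nat_add_iff 1).mpr h1
    exact (h2.congr (by intro n; push_cast; ring_nf)).mul_left c
  refine Summable.of_norm_bounded hg fun n => ?_
  have hpos : (0 : ℝ) < (n + 1 : ℝ) := by positivity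
  have hb := hc (n+1) (by omega)
  have hnorm : ‖α (n+1) / ((n+1 : ℕ) : ℂ)^2‖ = ‖α (n+1)‖ / ((n+1 : ℝ))^2 := by
    rw [norm_div, norm_pow, Complex.norm_natCast]
    push_cast
    ring_nf
  rw [hnorm]
  have hcast : ((n+1 : ℕ) : ℝ) = (n+1 : ℝ) := by push_cast; ring
  rw [hcast] at hb
  have h3 : ‖α (n+1)‖ / ((n+1 : ℝ))^2 ≤ (c * (n+1 : ℝ) ^ ((1:ℝ)/2)) / ((n+1 : ℝ))^2 := by
    gcongr
  refine h3.trans (le_of_eq ?_)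
  rw [mul_div_assoc, ← Real.rpow_natCast ((n+1:ℝ)) 2, ← Real.rpow_sub hpos]
  norm_num

/-- With `α(n) ≪ n^ε` and `∑ α(n)/n` convergent, the function
`f₁(x) = ∑ (α(n)/n) s(x/n)` is differentiable at every non-integer `x > 0`, with
derivative the constant `-∑_{n=1}^∞ α(n)/n²`. -/
theorem f1_hasDerivAt (α : ℕ → ℂ)
    (hgrow : ∀ ε : ℝ, 0 < ε → ∃ c : ℝ, ∀ n : ℕ, 1 ≤ n → ‖α n‖ ≤ c * (n : ℝ) ^ ε)
    (hα : ∃ l : ℂ, Tendsto (fun N : ℕ => ∑ n ∈ Finset.Icc 1 N, α n / (n : ℂ)) atTop (𝓝 l))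
    (f₁ : ℝ → ℂ)
    (hf₁ : ∀ x : ℝ, Tendsto
      (fun N : ℕ => ∑ n ∈ Finset.Icc 1 N, (α n / (n : ℂ)) * ((saw (x / n) : ℝ) : ℂ))
      atTop (𝓝 (f₁ x))) :
    ∀ x : ℝ, 0 < x → (¬ ∃ k : ℤ, x = (k : ℝ)) →
      HasDerivAt f₁ (-(∑' n : ℕ, α (n+1) / ((n+1 : ℕ) : ℂ)^2)) x := by
  obtain ⟨l, hl⟩ := hα
  intro x hx hxni
  set S : ℂ := ∑' n : ℕ, α (n+1) / ((n+1 : ℕ) : ℂ)^2 with hSdef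
  have hS : Summable (fun n : ℕ => α (n+1) / ((n+1 : ℕ) : ℂ)^2) := summable_a α hgrow
  have hB : Tendsto (fun M : ℕ => ∑ n ∈ Finset.Icc 1 M, α n / (n:ℂ)^2) atTop (𝓝 S) :=
    sum_Icc_tendsto (fun n => α n / (n:ℂ)^2) hS
  set N : ℕ := ⌈x⌉₊ + 1 with hNdef
  have hxN : x < (N : ℝ) := by
    have := Nat.le_ceil x
    push_cast [hNdef]
    linarith
  have hN1 : 1 ≤ N := by omega
  -- the local model function
  set F : ℝ → ℂ := fun y =>
    (∑ n ∈ Finset.Icc 1 N, (α n / (n:ℂ)) * ((saw (y/n) : ℝ) : ℂ))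
    - (∑ n ∈ Finset.Icc 1 N, (α n / (n:ℂ)) * (((1/2 - y/n : ℝ)) : ℂ))
    + (l/2 - (y:ℂ) * S) with hFdef
  -- D tendsto
  have hD : ∀ y : ℝ, Tendsto (fun M : ℕ => ∑ n ∈ Finset.Icc 1 M,
      (α n / (n:ℂ)) * (((1/2 - y/n : ℝ)) : ℂ)) atTop (𝓝 (l/2 - (y:ℂ) * S)) := by
    intro y
    have hre : ∀ M : ℕ, ∑ n ∈ Finset.Icc 1 M, (α n / (n:ℂ)) * (((1/2 - y/n : ℝ)) : ℂ)
        = (∑ n ∈ Finset.Icc 1 M, α n / (n:ℂ)) / 2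
          - (y:ℂ) * ∑ n ∈ Finset.Icc 1 M, α n / (n:ℂ)^2 := by
      intro M
      rw [Finset.sum_div, Finset.mul_sum, ← Finset.sum_sub_distrib]
      refine Finset.sum_congr rfl fun n hn => ?_
      push_cast
      ring
    have := (hl.div_const 2).sub (hB.const_mul (y:ℂ))
    exact (this.congr fun M => (hre M).symm)
  -- eventual equality of partial sums
  have heq : ∀ y ∈ Set.Ioo (0:ℝ) (N:ℝ), f₁ y = F y := by
    intro y hy
    refine tendsto_nhds_unique (hf₁ y) ?_
    have hkey : ∀ M : ℕ, N ≤ M →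
        (∑ n ∈ Finset.Icc 1 M, (α n / (n:ℂ)) * ((saw (y/n) : ℝ) : ℂ))
        = ((∑ n ∈ Finset.Icc 1 N, (α n / (n:ℂ)) * ((saw (y/n) : ℝ) : ℂ))
            - (∑ n ∈ Finset.Icc 1 N, (α n / (n:ℂ)) * (((1/2 - y/n : ℝ)) : ℂ)))
          + ∑ n ∈ Finset.Icc 1 M, (α n / (n:ℂ)) * (((1/2 - y/n : ℝ)) : ℂ) := by
      intro M hM
      have hsplit : Finset.Icc 1 M = Finset.Icc 1 N ∪ Finset.Ioc N M := by
        ext k; simp only [Finset.mem_Icc, Finset.mem_union, Finset.mem_Ioc]; omega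
      have hdisj : Disjoint (Finset.Icc 1 N) (Finset.Ioc N M) := by
        simp only [Finset.disjoint_left, Finset.mem_Icc, Finset.mem_Ioc]
        omega
      have hsaw : ∀ n ∈ Finset.Ioc N M, ((saw (y/n) : ℝ) : ℂ) = (((1/2 - y/n : ℝ)) : ℂ) := by
        intro n hn
        obtain ⟨hn1, _⟩ := Finset.mem_Ioc.mp hn
        have hn0 : (0 : ℝ) < (n : ℝ) := by exact_mod_cast Nat.cast_pos.mpr (show 0 < n by omega)
        have hlt : y / (n:ℝ) < 1 := by
          rw [div_lt_one hn0]
          have : (N : ℝ) ≤ (n : ℝ) := Nat.cast_le.mpr hn1.le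
          linarith [hy.2]
        have hgt : 0 < y / (n:ℝ) := div_pos hy.1 hn0
        have hni : ¬∃ k : ℤ, y / n = (k : ℝ) := by
          rintro ⟨k, hk⟩
          rw [hk] at hlt hgt
          have h1 : 0 < k := by exact_mod_cast hgt
          have h2 : k < 1 := by exact_mod_cast hlt
          omega
        have hsawreal : saw (y / n) = 1/2 - y/n := by
          rw [saw_eq_of_not_int hni, Int.fract_eq_self.mpr ⟨le_of_lt hgt, hlt⟩]
        rw [hsawreal]
      rw [hsplit, Finset.sum_union hdisj, Finset.sum_union hdisj]
      have : ∑ n ∈ Finset.Ioc N M, (α n / (n:ℂ)) * ((saw (y/n) : ℝ) : ℂ)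
          = ∑ n ∈ Finset.Ioc N M, (α n / (n:ℂ)) * (((1/2 - y/n : ℝ)) : ℂ) :=
        Finset.sum_congr rfl fun n hn => by rw [hsaw n hn]
      rw [this]
      ring
    have h2 : Tendsto (fun M : ℕ => ∑ n ∈ Finset.Icc 1 M,
        (α n / (n:ℂ)) * ((saw (y/n) : ℝ) : ℂ)) atTop (𝓝 (F y)) := by
      have hc := (tendsto_const_nhds (x := (∑ n ∈ Finset.Icc 1 N, (α n / (n:ℂ)) * ((saw (y/n) : ℝ) : ℂ))
            - (∑ n ∈ Finset.Icc 1 N, (α n / (n:ℂ)) * (((1/2 - y/n : ℝ)) : ℂ))) (f := atTop (α := ℕ))).add (hD y)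
      refine hc.congr' ?_
      filter_upwards [eventually_ge_atTop N] with M hM
      exact (hkey M hM).symm
    exact h2
  -- F has the derivative
  have hF : HasDerivAt F (-S) x := by
    have hterm1 : ∀ n ∈ Finset.Icc 1 N, HasDerivAt
        (fun y : ℝ => (α n / (n:ℂ)) * ((saw (y/n) : ℝ) : ℂ))
        ((α n / (n:ℂ)) * ((-(1/(n:ℝ)) : ℝ) : ℂ)) x := by
      intro n hn
      obtain ⟨hn1, _⟩ := Finset.mem_Icc.mp hn
      exact ((saw_div_hasDerivAt n hn1 hxni).ofReal_comp).const_mul _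
    have hterm2 : ∀ n ∈ Finset.Icc 1 N, HasDerivAt
        (fun y : ℝ => (α n / (n:ℂ)) * (((1/2 - y/n : ℝ)) : ℂ))
        ((α n / (n:ℂ)) * ((-(1/(n:ℝ)) : ℝ) : ℂ)) x := by
      intro n hn
      have hd : HasDerivAt (fun y : ℝ => (1/2 - y/n : ℝ)) (-(1/(n:ℝ))) x := by
        simpa [Pi.sub_def] using ((hasDerivAt_const x (1/2:ℝ)).sub ((hasDerivAt_id x).div_const (n:ℝ)))
      exact (hd.ofReal_comp).const_mul _
    have h1 := HasDerivAt.fun_sum hterm1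
    have h2 := HasDerivAt.fun_sum hterm2
    have h3 : HasDerivAt (fun y : ℝ => l/2 - (y:ℂ) * S) (-S) x := by
      have hid : HasDerivAt (fun y : ℝ => ((y:ℝ) : ℂ)) 1 x := by
        simpa using (hasDerivAt_id x).ofReal_comp
      simpa [Pi.sub_def] using (hasDerivAt_const x (l/2)).sub (hid.mul_const S)
    rw [hFdef]
    simpa [Pi.sub_def, Pi.add_def] using (h1.sub h2).add h3
  exact hF.congr_of_eventuallyEq
    (Filter.eventuallyEq_of_mem (Ioo_mem_nhds hx hxN) heq)
end

section
/- Let χ be a non-principal real Dirichlet character mod q, q > 2, and φ(n,χ) = n∏_{p|n}(1 - χ(p)/p). Define E₁(x,χ) as ∑_{n≤x}φ(n,χ) - x²/(2L(2,χ)) for non-integer x and as the average of one-sided limits at integers. Then for x ≥ 0, E₁(x,χ) = x·f(x,χ) + (1/2)g(x,χ), where f(x,χ) = ∑_{n=1}^∞ (μ(n)χ(n)/n)s(x/n) and g(x,χ) = ∑_{n=1}^∞ μ(n)χ(n){x/n}({x/n}-1). -/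
open Filter Topology Classical

/-- The twisted Euler φ-function `φ(n,χ) = n ∏_{p|n} (1 - χ(p)/p)`. -/
noncomputable def phiChi {q : ℕ} (χ : DirichletCharacter ℂ q) (n : ℕ) : ℂ :=
  (n : ℂ) * ∏ p ∈ n.primeFactors, (1 - χ p / (p : ℂ))

open scoped LSeries.notation

lemma KW.squarefree_prod {s : Finset ℕ} (hs : ∀ p ∈ s, p.Prime) :
    Squarefree (∏ p ∈ s, p) := by
  classical
  induction s using Finset.induction_on with
  | empty => simpa using squarefree_one
  | insert _ _ ha ih =>
    rename_i a s
    rw [Finset.prod_insert ha]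
    have hap : a.Prime := hs a (Finset.mem_insert_self a s)
    have hcop : Nat.Coprime a (∏ p ∈ s, p) := by
      rw [Nat.Prime.coprime_iff_not_dvd hap]
      intro hdvd
      obtain ⟨q, hq, hq'⟩ := (Nat.Prime.prime hap).exists_mem_finset_dvd hdvd
      have := (Nat.prime_dvd_prime_iff_eq hap (hs q (Finset.mem_insert_of_mem hq))).mp hq'
      exact ha (this ▸ hq)
    exact (Nat.squarefree_mul hcop).mpr ⟨hap.squarefree, ih fun p hp => hs p (Finset.mem_insert_of_mem hp)⟩

/-- The arithmetic function `d ↦ χ d / d`. -/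
noncomputable def KW.fchi {q : ℕ} (χ : DirichletCharacter ℂ q) : ArithmeticFunction ℂ :=
  ⟨fun d => χ d / d, by simp⟩

lemma KW.fchi_mult {q : ℕ} (χ : DirichletCharacter ℂ q) : (KW.fchi χ).IsMultiplicative := by
  constructor
  · simp [KW.fchi]
  · intro m n _
    simp only [KW.fchi, ArithmeticFunction.coe_mk, Nat.cast_mul, map_mul]
    by_cases hm : (m : ℂ) = 0
    · simp [hm]
    by_cases hn : (n : ℂ) = 0
    · simp [hn]
    field_simp

lemma KW.prod_one_sub_eq_sum {q : ℕ} (χ : DirichletCharacter ℂ q) {n : ℕ} (hn : n ≠ 0) :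
    ∏ p ∈ n.primeFactors, (1 - χ p / p) =
      ∑ d ∈ n.divisors, ((ArithmeticFunction.moebius d : ℤ) : ℂ) * (χ d / d) := by
  classical
  set r := ∏ p ∈ n.primeFactors, p with hr
  have hprimes : ∀ p ∈ n.primeFactors, p.Prime := fun p hp => Nat.prime_of_mem_primeFactors hp
  have hsq : Squarefree r := KW.squarefree_prod hprimes
  have hpf : r.primeFactors = n.primeFactors := Nat.primeFactors_prod hprimes
  have key := (KW.fchi_mult χ).prodPrimeFactors_one_sub_of_squarefree (KW.fchi χ) hsq
  rw [hpf] at key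
  have hterm : ∀ p ∈ n.primeFactors, (1 - χ p / p) = (1 - KW.fchi χ p) := by
    intro p hp; simp [KW.fchi]
  rw [Finset.prod_congr rfl hterm, key]
  have hrdvd : r ∣ n := Nat.prod_primeFactors_dvd n
  have hsub : r.divisors ⊆ n.divisors := Nat.divisors_subset_of_dvd hn hrdvd
  rw [Finset.sum_subset hsub]
  · apply Finset.sum_congr rfl
    intro d _
    simp [KW.fchi, ArithmeticFunction.intCoe_apply]
  · intro d hd hdr
    have hdn : d ∣ n := (Nat.mem_divisors.mp hd).1
    have hdnsq : ¬ Squarefree d := by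
      intro hdsq
      apply hdr
      rw [Nat.mem_divisors]
      refine ⟨?_, hsq.ne_zero⟩
      calc d = ∏ p ∈ d.primeFactors, p := (Nat.prod_primeFactors_of_squarefree hdsq).symm
        _ ∣ r := Finset.prod_dvd_prod_of_subset _ _ _ (Nat.primeFactors_mono hdn hn)
    simp [ArithmeticFunction.moebius_eq_zero_of_not_squarefree hdnsq]

noncomputable def KW.a {q : ℕ} (χ : DirichletCharacter ℂ q) (n : ℕ) : ℂ :=
  ((ArithmeticFunction.moebius n : ℤ) : ℂ) * χ n

lemma KW.a_eq {q : ℕ} (χ : DirichletCharacter ℂ q) :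
    (fun n => KW.a χ n) = ↗χ * ↗(ArithmeticFunction.moebius) := by
  funext n
  simp only [KW.a, Pi.mul_apply]
  ring

lemma KW.summable {q : ℕ} (χ : DirichletCharacter ℂ q) :
    LSeriesSummable (fun n => KW.a χ n) 2 := by
  rw [KW.a_eq]
  exact DirichletCharacter.LSeriesSummable_mul χ
    (ArithmeticFunction.LSeriesSummable_moebius_iff.mpr (by norm_num))

lemma KW.mul_inv {q : ℕ} (χ : DirichletCharacter ℂ q) :
    LSeries (fun n => χ n) 2 * LSeries (fun n => KW.a χ n) 2 = 1 := by
  rw [KW.a_eq]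
  exact DirichletCharacter.LSeries.mul_mu_eq_one χ (s := 2) (by norm_num)

lemma KW.tendsto_partial {q : ℕ} (χ : DirichletCharacter ℂ q) :
    Tendsto (fun N : ℕ => ∑ n ∈ Finset.Icc 1 N, KW.a χ n / (n : ℂ) ^ 2) atTop
      (𝓝 (LSeries (fun n => KW.a χ n) 2)) := by
  have h1 : HasSum (LSeries.term (fun n => KW.a χ n) 2) (LSeries (fun n => KW.a χ n) 2) :=
    (KW.summable χ).hasSum
  have h2 := h1.tendsto_sum_nat.comp (tendsto_add_atTop_nat 1)
  refine h2.congr fun N => ?_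
  show ∑ i ∈ Finset.range (N + 1), LSeries.term (fun n => KW.a χ n) 2 i = _
  rw [Finset.sum_range_succ', LSeries.term_zero, add_zero, ← Finset.Ico_add_one_right_eq_Icc,
    Finset.sum_Ico_eq_sum_range]
  show _ = ∑ i ∈ Finset.range N, _
  apply Finset.sum_congr rfl
  intro i _
  rw [show i + 1 = 1 + i by ring, LSeries.term_of_ne_zero (by omega : 1 + i ≠ 0),
    show (2:ℂ) = ((2:ℕ):ℂ) by norm_num, Complex.cpow_natCast]

lemma KW.term_tail {q : ℕ} (χ : DirichletCharacter ℂ q) (x : ℝ) (hx : 0 ≤ x) (n : ℕ)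
    (hn : ⌊x⌋₊ < n) :
    (x : ℂ) * ((KW.a χ n / n) * ((saw (x / n) : ℝ) : ℂ)) +
      (1/2 : ℂ) * (KW.a χ n * ((Int.fract (x / n) : ℝ) : ℂ) * (((Int.fract (x / n) : ℝ) : ℂ) - 1))
    = -((x : ℂ) ^ 2 / 2) * (KW.a χ n / (n : ℂ) ^ 2) := by
  have hn0 : 0 < n := by omega
  have hnR : (0 : ℝ) < n := by exact_mod_cast hn0
  have hxn : x < n := by
    calc x < ⌊x⌋₊ + 1 := Nat.lt_floor_add_one x
    _ ≤ n := by exact_mod_cast Nat.succ_le_of_lt hn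
  have hfr : Int.fract (x / n) = x / n :=
    Int.fract_eq_self.mpr ⟨div_nonneg hx hnR.le, (div_lt_one hnR).mpr hxn⟩
  rcases eq_or_lt_of_le hx with h0 | h0
  · simp [← h0, saw, Int.fract_zero]
  · have hsaw : saw (x / n) = 1/2 - x / n := by
      rw [saw, if_neg, hfr]
      rintro ⟨k, hk⟩
      have h1 : (0 : ℝ) < k := hk ▸ div_pos h0 hnR
      have h2 : (k : ℝ) < 1 := hk ▸ (div_lt_one hnR).mpr hxn
      have : (0 : ℤ) < k := by exact_mod_cast h1
      have : k < 1 := by exact_mod_cast h2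
      omega
    have hnC : (n : ℂ) ≠ 0 := Nat.cast_ne_zero.mpr hn0.ne'
    rw [hsaw, hfr]
    push_cast
    field_simp
    ring

lemma KW.term_head {q : ℕ} (χ : DirichletCharacter ℂ q) (x : ℝ) (hx : 0 ≤ x) (n : ℕ)
    (hn : 0 < n) :
    (x : ℂ) * ((KW.a χ n / n) * ((saw (x / n) : ℝ) : ℂ)) +
      (1/2 : ℂ) * (KW.a χ n * ((Int.fract (x / n) : ℝ) : ℂ) * (((Int.fract (x / n) : ℝ) : ℂ) - 1))
    = KW.a χ n * ((⌊x / (n:ℝ)⌋₊ : ℂ) * ((⌊x / (n:ℝ)⌋₊ : ℂ) + 1) / 2 - (x : ℂ) ^ 2 / (2 * (n : ℂ) ^ 2))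
      - (if ∃ k : ℤ, x / (n:ℝ) = (k : ℝ) then KW.a χ n * ((x : ℂ) / (2 * (n : ℂ))) else 0) := by
  have hnR : (0 : ℝ) < n := by exact_mod_cast hn
  have hnC : (n : ℂ) ≠ 0 := Nat.cast_ne_zero.mpr hn.ne'
  have ht0 : 0 ≤ x / (n : ℝ) := div_nonneg hx hnR.le
  have hfloor : ((⌊x / (n:ℝ)⌋₊ : ℝ)) = x / n - Int.fract (x / n) := by
    rw [Int.fract, ← Int.natCast_floor_eq_floor ht0]
    push_cast
    ring
  by_cases h : ∃ k : ℤ, x / (n:ℝ) = (k : ℝ)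
  · obtain ⟨k, hk⟩ := h
    have hfr : Int.fract (x / n) = 0 := by rw [hk, Int.fract_intCast]
    have hsaw : saw (x / n) = 0 := by rw [saw, if_pos ⟨k, hk⟩]
    have hfC : ((⌊x / (n:ℝ)⌋₊ : ℂ)) = (x : ℂ) / n := by
      have : ((⌊x / (n:ℝ)⌋₊ : ℝ)) = x / n := by rw [hfloor, hfr]; ring
      calc ((⌊x / (n:ℝ)⌋₊ : ℂ)) = (((⌊x / (n:ℝ)⌋₊ : ℝ)) : ℂ) := by push_cast; ring
      _ = (x : ℂ) / n := by rw [this]; push_cast; ring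
    rw [hsaw, hfr, hfC, if_pos ⟨k, hk⟩]
    push_cast
    field_simp
    ring
  · have hsaw : saw (x / n) = 1/2 - Int.fract (x / n) := by rw [saw, if_neg h]
    have hfC : ((⌊x / (n:ℝ)⌋₊ : ℂ)) = (x : ℂ) / n - ((Int.fract (x / n) : ℝ) : ℂ) := by
      calc ((⌊x / (n:ℝ)⌋₊ : ℂ)) = (((⌊x / (n:ℝ)⌋₊ : ℝ)) : ℂ) := by push_cast; ring
      _ = _ := by rw [hfloor]; push_cast; ring
    rw [hsaw, if_neg h, hfC]
    push_cast
    field_simp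
    ring

lemma KW.phiChi_eq_sum {q : ℕ} (χ : DirichletCharacter ℂ q) {n : ℕ} (hn : n ≠ 0) :
    phiChi χ n = ∑ d ∈ n.divisors, KW.a χ d * ((n / d : ℕ) : ℂ) := by
  rw [phiChi, KW.prod_one_sub_eq_sum χ hn, Finset.mul_sum]
  apply Finset.sum_congr rfl
  intro d hd
  obtain ⟨hdn, -⟩ := Nat.mem_divisors.mp hd
  have hdz : d ≠ 0 := by rintro rfl; exact hn (Nat.eq_zero_of_zero_dvd hdn)
  have hd0 : (d : ℂ) ≠ 0 := Nat.cast_ne_zero.mpr hdz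
  rw [Nat.cast_div hdn hd0, KW.a]
  field_simp

lemma KW.swap (M : ℕ) (g : ℕ → ℕ → ℂ) :
    ∑ n ∈ Finset.Icc 1 M, ∑ p ∈ n.divisorsAntidiagonal, g p.1 p.2 =
      ∑ d ∈ Finset.Icc 1 M, ∑ m ∈ Finset.Icc 1 (M / d), g d m := by
  classical
  rw [Finset.sum_sigma', Finset.sum_sigma']
  apply Finset.sum_nbij' (i := fun p => (⟨p.2.1, p.2.2⟩ : (_ : ℕ) × ℕ))
    (j := fun p => (⟨p.1 * p.2, (p.1, p.2)⟩ : (_ : ℕ) × ℕ × ℕ))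
  · rintro ⟨n, d, m⟩ hp
    simp only [Finset.mem_sigma, Finset.mem_Icc, Nat.mem_divisorsAntidiagonal] at hp ⊢
    obtain ⟨⟨h1, h2⟩, h3, h4⟩ := hp
    have hd0 : 0 < d := by rcases Nat.eq_zero_or_pos d with h|h; · subst h; simp at h3; omega
                           · exact h
    have hm0 : 0 < m := by rcases Nat.eq_zero_or_pos m with h|h; · subst h; simp at h3; omega
                           · exact h
    have hdM : d ≤ M := le_trans (le_trans (Nat.le_mul_of_pos_right d hm0) (le_of_eq h3)) h2
    have hmd : m ≤ M / d := (Nat.le_div_iff_mul_le hd0).mpr (by rw [mul_comm, h3]; exact h2)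
    exact ⟨⟨hd0, hdM⟩, hm0, hmd⟩
  · rintro ⟨d, m⟩ hp
    simp only [Finset.mem_sigma, Finset.mem_Icc, Nat.mem_divisorsAntidiagonal] at hp ⊢
    obtain ⟨⟨h1, h2⟩, h3, h4⟩ := hp
    have h5 : d * m ≤ M := by
      have := (Nat.le_div_iff_mul_le (by omega : 0 < d)).mp h4
      rw [mul_comm]; exact this
    exact ⟨⟨Nat.one_le_iff_ne_zero.mpr (Nat.mul_ne_zero (by omega) (by omega)), h5⟩, trivial,
      Nat.mul_ne_zero (by omega) (by omega)⟩
  · rintro ⟨n, d, m⟩ hp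
    simp only [Finset.mem_sigma, Finset.mem_Icc, Nat.mem_divisorsAntidiagonal] at hp
    obtain ⟨⟨h1, h2⟩, h3, h4⟩ := hp
    simp only [h3]
  · rintro ⟨d, m⟩ _; rfl
  · rintro ⟨n, d, m⟩ _; rfl

lemma KW.gauss (K : ℕ) : ∑ m ∈ Finset.Icc 1 K, (m : ℂ) = (K : ℂ) * ((K : ℂ) + 1) / 2 := by
  induction K with
  | zero => simp
  | succ k ih =>
    rw [Finset.sum_Icc_succ_top (by omega), ih]
    push_cast
    ring

/-- correction term -/
noncomputable def KW.D {q : ℕ} (χ : DirichletCharacter ℂ q) (x : ℝ) : ℂ :=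
  ∑ n ∈ Finset.Icc 1 ⌊x⌋₊,
    (if ∃ k : ℤ, x / (n:ℝ) = (k : ℝ) then KW.a χ n * ((x : ℂ) / (2 * (n : ℂ))) else 0)

lemma KW.head_eq_phi {q : ℕ} (χ : DirichletCharacter ℂ q) (x : ℝ) :
    ∑ n ∈ Finset.Icc 1 ⌊x⌋₊,
        KW.a χ n * ((⌊x / (n:ℝ)⌋₊ : ℂ) * ((⌊x / (n:ℝ)⌋₊ : ℂ) + 1) / 2)
      = ∑ n ∈ Finset.Icc 1 ⌊x⌋₊, phiChi χ n := by
  calc ∑ n ∈ Finset.Icc 1 ⌊x⌋₊,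
        KW.a χ n * ((⌊x / (n:ℝ)⌋₊ : ℂ) * ((⌊x / (n:ℝ)⌋₊ : ℂ) + 1) / 2)
      = ∑ d ∈ Finset.Icc 1 ⌊x⌋₊, ∑ m ∈ Finset.Icc 1 (⌊x⌋₊ / d), KW.a χ d * (m : ℂ) := by
        apply Finset.sum_congr rfl
        intro n _
        rw [Nat.floor_div_natCast x n, ← Finset.mul_sum, KW.gauss]
    _ = ∑ n ∈ Finset.Icc 1 ⌊x⌋₊, ∑ p ∈ n.divisorsAntidiagonal, KW.a χ p.1 * (p.2 : ℂ) :=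
        (KW.swap ⌊x⌋₊ (fun d m => KW.a χ d * (m : ℂ))).symm
    _ = ∑ n ∈ Finset.Icc 1 ⌊x⌋₊, phiChi χ n := by
        apply Finset.sum_congr rfl
        intro n hn
        have hn0 : n ≠ 0 := by have := (Finset.mem_Icc.mp hn).1; omega
        rw [KW.phiChi_eq_sum χ hn0, ← Nat.sum_divisorsAntidiagonal (fun d m => KW.a χ d * (m : ℂ))]

lemma KW.sum_eq {q : ℕ} (χ : DirichletCharacter ℂ q) (x : ℝ) (hx : 0 ≤ x) (N : ℕ)
    (hN : ⌊x⌋₊ ≤ N) :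
    ∑ n ∈ Finset.Icc 1 N,
        ((x : ℂ) * ((KW.a χ n / n) * ((saw (x / n) : ℝ) : ℂ)) +
          (1/2 : ℂ) * (KW.a χ n * ((Int.fract (x / n) : ℝ) : ℂ) *
            (((Int.fract (x / n) : ℝ) : ℂ) - 1)))
      = ∑ n ∈ Finset.Icc 1 ⌊x⌋₊, phiChi χ n - KW.D χ x
        - ((x : ℂ) ^ 2 / 2) * ∑ n ∈ Finset.Icc 1 N, KW.a χ n / (n : ℂ) ^ 2 := by
  set M := ⌊x⌋₊ with hM
  have hsplit : ∀ (F : ℕ → ℂ), ∑ n ∈ Finset.Icc 1 N, F n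
      = ∑ n ∈ Finset.Icc 1 M, F n + ∑ n ∈ Finset.Ioc M N, F n := by
    intro F
    rw [(show Finset.Icc 1 N = Finset.Ioc 0 N from Finset.Icc_add_one_left_eq_Ioc (a := 0) (b := N)),
      (show Finset.Icc 1 M = Finset.Ioc 0 M from Finset.Icc_add_one_left_eq_Ioc (a := 0) (b := M)), ← Finset.sum_Ioc_consecutive _ (Nat.zero_le M) hN]
  rw [hsplit, hsplit (fun n => KW.a χ n / (n : ℂ) ^ 2)]
  have htail : ∑ n ∈ Finset.Ioc M N,
      ((x : ℂ) * ((KW.a χ n / n) * ((saw (x / n) : ℝ) : ℂ)) +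
        (1/2 : ℂ) * (KW.a χ n * ((Int.fract (x / n) : ℝ) : ℂ) *
          (((Int.fract (x / n) : ℝ) : ℂ) - 1)))
      = -((x : ℂ) ^ 2 / 2) * ∑ n ∈ Finset.Ioc M N, KW.a χ n / (n : ℂ) ^ 2 := by
    rw [Finset.mul_sum]
    apply Finset.sum_congr rfl
    intro n hn
    exact KW.term_tail χ x hx n (Finset.mem_Ioc.mp hn).1
  have hhead : ∑ n ∈ Finset.Icc 1 M,
      ((x : ℂ) * ((KW.a χ n / n) * ((saw (x / n) : ℝ) : ℂ)) +
        (1/2 : ℂ) * (KW.a χ n * ((Int.fract (x / n) : ℝ) : ℂ) *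
          (((Int.fract (x / n) : ℝ) : ℂ) - 1)))
      = ∑ n ∈ Finset.Icc 1 M, phiChi χ n - KW.D χ x
        - ((x : ℂ) ^ 2 / 2) * ∑ n ∈ Finset.Icc 1 M, KW.a χ n / (n : ℂ) ^ 2 := by
    have : ∀ n ∈ Finset.Icc 1 M,
        ((x : ℂ) * ((KW.a χ n / n) * ((saw (x / n) : ℝ) : ℂ)) +
          (1/2 : ℂ) * (KW.a χ n * ((Int.fract (x / n) : ℝ) : ℂ) *
            (((Int.fract (x / n) : ℝ) : ℂ) - 1)))
        = (KW.a χ n * ((⌊x / (n:ℝ)⌋₊ : ℂ) * ((⌊x / (n:ℝ)⌋₊ : ℂ) + 1) / 2)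
            - ((x : ℂ) ^ 2 / 2) * (KW.a χ n / (n : ℂ) ^ 2))
          - (if ∃ k : ℤ, x / (n:ℝ) = (k : ℝ) then KW.a χ n * ((x : ℂ) / (2 * (n : ℂ))) else 0) := by
      intro n hn
      have hn0 : 0 < n := by have := (Finset.mem_Icc.mp hn).1; omega
      rw [KW.term_head χ x hx n hn0]
      have hnC : (n : ℂ) ≠ 0 := Nat.cast_ne_zero.mpr hn0.ne'
      congr 1
      field_simp
    rw [Finset.sum_congr rfl this, Finset.sum_sub_distrib, Finset.sum_sub_distrib,
      KW.head_eq_phi, ← Finset.mul_sum]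
    simp only [KW.D, ← hM]
    ring
  rw [htail, hhead]
  ring

lemma KW.D_int {q : ℕ} (χ : DirichletCharacter ℂ q) (N₀ : ℕ) (hN₀ : 0 < N₀) :
    KW.D χ (N₀ : ℝ) = phiChi χ N₀ / 2 := by
  rw [KW.D, Nat.floor_natCast]
  rw [Finset.sum_ite, Finset.sum_const_zero, add_zero]
  have hfil : (Finset.Icc 1 N₀).filter (fun n : ℕ => ∃ k : ℤ, (N₀ : ℝ) / ((n:ℕ):ℝ) = (k : ℝ))
      = N₀.divisors := by
    ext d
    simp only [Finset.mem_filter, Finset.mem_Icc, Nat.mem_divisors]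
    constructor
    · rintro ⟨⟨h1, h2⟩, k, hk⟩
      have hd0 : (0:ℝ) < d := by exact_mod_cast h1
      have hNk : (N₀ : ℝ) = d * k := by
        field_simp at hk
        linarith [hk]
      have hk0 : 0 ≤ k := by
        by_contra h
        push_neg at h
        have : (k:ℝ) ≤ -1 := by exact_mod_cast Int.le_sub_one_of_lt h
        nlinarith [hd0, (by exact_mod_cast hN₀ : (0:ℝ) < (N₀:ℝ))]
      have htn : ((k.toNat : ℕ) : ℝ) = (k : ℝ) := by
        exact_mod_cast congrArg (Int.cast : ℤ → ℝ) (Int.toNat_of_nonneg hk0)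
      have : (N₀ : ℝ) = ((d * k.toNat : ℕ) : ℝ) := by
        push_cast
        rw [htn]
        exact hNk
      have hNnat : N₀ = d * k.toNat := by exact_mod_cast this
      exact ⟨⟨k.toNat, hNnat⟩, hN₀.ne'⟩
    · rintro ⟨hdvd, -⟩
      have hd0 : 0 < d := Nat.pos_of_dvd_of_pos hdvd hN₀
      have hdR : ((d:ℝ)) ≠ 0 := by positivity
      refine ⟨⟨hd0, Nat.le_of_dvd hN₀ hdvd⟩, ((N₀ / d : ℕ) : ℤ), ?_⟩
      rw [Int.cast_natCast, Nat.cast_div hdvd hdR]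
  rw [hfil, KW.phiChi_eq_sum χ hN₀.ne']
  rw [Finset.sum_div]
  apply Finset.sum_congr rfl
  intro d hd
  obtain ⟨hdvd, -⟩ := Nat.mem_divisors.mp hd
  have hd0 : 0 < d := Nat.pos_of_dvd_of_pos hdvd hN₀
  have hdC : ((d:ℂ)) ≠ 0 := Nat.cast_ne_zero.mpr hd0.ne'
  rw [Nat.cast_div hdvd hdC]
  push_cast
  ring

lemma KW.E_tendsto_right {q : ℕ} (χ : DirichletCharacter ℂ q) (E : ℝ → ℂ)
    (hE : ∀ x : ℝ, E x =
      ∑ n ∈ Finset.Icc 1 ⌊x⌋₊, phiChi χ n - (x : ℂ) ^ 2 / (2 * LSeries (fun n => χ n) 2))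
    (N₀ : ℕ) :
    Tendsto E (nhdsWithin (N₀ : ℝ) (Set.Ioi (N₀ : ℝ))) (𝓝 (E (N₀ : ℝ))) := by
  set L2 := LSeries (fun n => χ n) 2
  set C := ∑ n ∈ Finset.Icc 1 N₀, phiChi χ n with hC
  have hcont : Tendsto (fun y : ℝ => C - (y:ℂ)^2/(2*L2)) (𝓝 (N₀:ℝ))
      (𝓝 (C - ((N₀:ℝ):ℂ)^2/(2*L2))) :=
    (continuous_const.sub ((Complex.continuous_ofReal.pow 2).div_const (2*L2))).tendsto _
  have hEN : E (N₀ : ℝ) = C - ((N₀:ℝ):ℂ)^2/(2*L2) := by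
    rw [hE, Nat.floor_natCast]
  rw [hEN]
  apply (hcont.mono_left nhdsWithin_le_nhds).congr'
  filter_upwards [Ioo_mem_nhdsGT_of_mem
    (Set.mem_Ico.mpr ⟨le_refl (N₀:ℝ), lt_add_one _⟩)] with y hy
  obtain ⟨hy1, hy2⟩ := Set.mem_Ioo.mp hy
  have hy0 : 0 ≤ y := le_trans (Nat.cast_nonneg N₀) hy1.le
  have hfl : ⌊y⌋₊ = N₀ := by
    rw [Nat.floor_eq_iff hy0]
    constructor
    · exact hy1.le
    · exact_mod_cast hy2
  rw [hE y, hfl]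

lemma KW.E_tendsto_left {q : ℕ} (χ : DirichletCharacter ℂ q) (E : ℝ → ℂ)
    (hE : ∀ x : ℝ, E x =
      ∑ n ∈ Finset.Icc 1 ⌊x⌋₊, phiChi χ n - (x : ℂ) ^ 2 / (2 * LSeries (fun n => χ n) 2))
    (N₀ : ℕ) (hN₀ : 0 < N₀) :
    Tendsto E (nhdsWithin (N₀ : ℝ) (Set.Iio (N₀ : ℝ))) (𝓝 (E (N₀ : ℝ) - phiChi χ N₀)) := by
  set L2 := LSeries (fun n => χ n) 2
  set C := ∑ n ∈ Finset.Icc 1 (N₀ - 1), phiChi χ n with hC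
  have hsum : ∑ n ∈ Finset.Icc 1 N₀, phiChi χ n = C + phiChi χ N₀ := by
    rw [hC, show N₀ = (N₀ - 1) + 1 by omega, Finset.sum_Icc_succ_top (by omega)]
    congr 2
  have hcont : Tendsto (fun y : ℝ => C - (y:ℂ)^2/(2*L2)) (𝓝 (N₀:ℝ))
      (𝓝 (C - ((N₀:ℝ):ℂ)^2/(2*L2))) :=
    (continuous_const.sub ((Complex.continuous_ofReal.pow 2).div_const (2*L2))).tendsto _
  have hEN : E (N₀ : ℝ) - phiChi χ N₀ = C - ((N₀:ℝ):ℂ)^2/(2*L2) := by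
    rw [hE, Nat.floor_natCast, hsum]
    ring
  rw [hEN]
  apply (hcont.mono_left nhdsWithin_le_nhds).congr'
  have hlt : (N₀ : ℝ) - 1 < N₀ := by linarith
  filter_upwards [Ioo_mem_nhdsLT_of_mem
    (Set.mem_Ioc.mpr ⟨hlt, le_refl (N₀:ℝ)⟩)] with y hy
  obtain ⟨hy1, hy2⟩ := Set.mem_Ioo.mp hy
  have hcast : ((N₀ - 1 : ℕ) : ℝ) = (N₀ : ℝ) - 1 := by
    push_cast [Nat.cast_sub hN₀]
    ring
  have hy0 : 0 ≤ y := by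
    have : (0:ℝ) ≤ (N₀:ℝ) - 1 := by
      have : (1:ℝ) ≤ N₀ := by exact_mod_cast hN₀
      linarith
    linarith
  have hfl : ⌊y⌋₊ = N₀ - 1 := by
    rw [Nat.floor_eq_iff hy0, hcast]
    exact ⟨hy1.le, by linarith⟩
  rw [hE y, hfl]

/-- Kaczorowski–Wiertelak decomposition: for a non-principal real Dirichlet character
`χ` mod `q`, `q > 2`, the normalized error term `E₁(x,χ)` of
`∑_{n≤x} φ(n,χ) - x²/(2L(2,χ))` satisfies `E₁(x,χ) = x f(x,χ) + (1/2) g(x,χ)`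
for all `x ≥ 0`. -/
theorem E1_decomposition (q : ℕ) (hq : 2 < q)
    (χ : DirichletCharacter ℂ q) (hχ : χ ≠ 1) (hreal : ∀ n : ℕ, ((χ n).im = 0))
    (E : ℝ → ℂ)
    (hE : ∀ x : ℝ, E x =
      ∑ n ∈ Finset.Icc 1 ⌊x⌋₊, phiChi χ n - (x : ℂ) ^ 2 / (2 * LSeries (fun n => χ n) 2))
    (E₁ : ℝ → ℂ)
    (hE₁ : ∀ x : ℝ, (¬ ∃ N : ℕ, 0 < N ∧ x = (N : ℝ)) → E₁ x = E x)
    (hE₁int : ∀ N : ℕ, 0 < N → ∃ Lp Lm : ℂ,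
      Tendsto E (nhdsWithin (N : ℝ) (Set.Ioi (N : ℝ))) (𝓝 Lp) ∧
      Tendsto E (nhdsWithin (N : ℝ) (Set.Iio (N : ℝ))) (𝓝 Lm) ∧
      E₁ (N : ℝ) = (Lm + Lp) / 2)
    (f : ℝ → ℂ)
    (hf : ∀ x : ℝ, Tendsto
      (fun N : ℕ => ∑ n ∈ Finset.Icc 1 N,
        (((ArithmeticFunction.moebius n : ℤ) : ℂ) * χ n / (n : ℂ)) * ((saw (x / n) : ℝ) : ℂ))
      atTop (𝓝 (f x)))
    (g : ℝ → ℂ)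
    (hg : ∀ x : ℝ, Tendsto
      (fun N : ℕ => ∑ n ∈ Finset.Icc 1 N,
        ((ArithmeticFunction.moebius n : ℤ) : ℂ) * χ n *
          ((Int.fract (x / n) : ℝ) : ℂ) * (((Int.fract (x / n) : ℝ) : ℂ) - 1))
      atTop (𝓝 (g x))) :
    ∀ x : ℝ, 0 ≤ x → E₁ x = (x : ℂ) * f x + (1/2 : ℂ) * g x := by
  intro x hx
  set L2 := LSeries (fun n => χ n) 2 with hL2def
  have hL2 : L2 ≠ 0 := left_ne_zero_of_mul_eq_one (KW.mul_inv χ)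
  -- the combined partial sums tend to x f x + (1/2) g x
  have hcomb : Tendsto
      (fun N : ℕ => ∑ n ∈ Finset.Icc 1 N,
        ((x : ℂ) * ((KW.a χ n / n) * ((saw (x / n) : ℝ) : ℂ)) +
          (1/2 : ℂ) * (KW.a χ n * ((Int.fract (x / n) : ℝ) : ℂ) *
            (((Int.fract (x / n) : ℝ) : ℂ) - 1))))
      atTop (𝓝 ((x : ℂ) * f x + (1/2 : ℂ) * g x)) := by
    have h1 := ((hf x).const_mul (x : ℂ)).add ((hg x).const_mul ((1:ℂ)/2))
    refine h1.congr fun N => ?_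
    rw [Finset.mul_sum, Finset.mul_sum, ← Finset.sum_add_distrib]
    apply Finset.sum_congr rfl
    intro n _
    simp only [KW.a]
  -- and also to the explicit limit
  have hcomb2 : Tendsto
      (fun N : ℕ => ∑ n ∈ Finset.Icc 1 N,
        ((x : ℂ) * ((KW.a χ n / n) * ((saw (x / n) : ℝ) : ℂ)) +
          (1/2 : ℂ) * (KW.a χ n * ((Int.fract (x / n) : ℝ) : ℂ) *
            (((Int.fract (x / n) : ℝ) : ℂ) - 1))))
      atTop (𝓝 (∑ n ∈ Finset.Icc 1 ⌊x⌋₊, phiChi χ n - KW.D χ x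
        - ((x : ℂ) ^ 2 / 2) * LSeries (fun n => KW.a χ n) 2)) := by
    have h2 : Tendsto (fun N : ℕ => ∑ n ∈ Finset.Icc 1 ⌊x⌋₊, phiChi χ n - KW.D χ x
        - ((x : ℂ) ^ 2 / 2) * ∑ n ∈ Finset.Icc 1 N, KW.a χ n / (n : ℂ) ^ 2) atTop
        (𝓝 (∑ n ∈ Finset.Icc 1 ⌊x⌋₊, phiChi χ n - KW.D χ x
          - ((x : ℂ) ^ 2 / 2) * LSeries (fun n => KW.a χ n) 2)) :=
      tendsto_const_nhds.sub ((KW.tendsto_partial χ).const_mul _)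
    apply h2.congr'
    filter_upwards [eventually_ge_atTop ⌊x⌋₊] with N hN
    exact (KW.sum_eq χ x hx N hN).symm
  have key : (x : ℂ) * f x + (1/2 : ℂ) * g x = E x - KW.D χ x := by
    have := tendsto_nhds_unique hcomb hcomb2
    rw [this, hE x]
    have hLinv : LSeries (fun n => KW.a χ n) 2 = 1 / L2 :=
      eq_one_div_of_mul_eq_one_left (by rw [mul_comm]; exact KW.mul_inv χ)
    rw [hLinv]
    field_simp
    ring
  by_cases hint : ∃ N : ℕ, 0 < N ∧ x = (N : ℝ)
  · obtain ⟨N₀, hN₀, rfl⟩ := hint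
    obtain ⟨Lp, Lm, hLp, hLm, hE1⟩ := hE₁int N₀ hN₀
    have hLp' : Lp = E (N₀ : ℝ) :=
      tendsto_nhds_unique hLp (KW.E_tendsto_right χ E hE N₀)
    have hLm' : Lm = E (N₀ : ℝ) - phiChi χ N₀ :=
      tendsto_nhds_unique hLm (KW.E_tendsto_left χ E hE N₀ hN₀)
    rw [hE1, hLp', hLm', key, KW.D_int χ N₀ hN₀]
    ring
  · rw [hE₁ x hint, key]
    have hD : KW.D χ x = 0 := by
      apply Finset.sum_eq_zero
      intro n hn
      rw [if_neg]
      rintro ⟨k, hk⟩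
      obtain ⟨hn1, hn2⟩ := Finset.mem_Icc.mp hn
      have hM1 : 1 ≤ ⌊x⌋₊ := le_trans hn1 hn2
      have hx1 : (1:ℝ) ≤ x := by
        have := Nat.floor_le hx
        have h1 : ((1:ℕ):ℝ) ≤ (⌊x⌋₊ : ℝ) := by exact_mod_cast hM1
        simpa using le_trans h1 this
      have hnR : (0:ℝ) < n := by exact_mod_cast hn1
      have hxk : x = (n : ℝ) * k := by
        field_simp at hk
        linarith [hk]
      have hk0 : 0 ≤ k := by
        by_contra h
        push_neg at h
        have : (k:ℝ) ≤ -1 := by exact_mod_cast Int.le_sub_one_of_lt h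
        nlinarith
      have htn : ((k.toNat : ℕ) : ℝ) = (k : ℝ) :=  by
        exact_mod_cast congrArg (Int.cast : ℤ → ℝ) (Int.toNat_of_nonneg hk0)
      apply hint
      refine ⟨n * k.toNat, ?_, ?_⟩
      · rcases Nat.eq_zero_or_pos (n * k.toNat) with h | h
        · exfalso
          have : ((n * k.toNat : ℕ) : ℝ) = 0 := by rw [h]; simp
          push_cast at this
          rw [htn] at this
          nlinarith
        · exact h
      · push_cast
        rw [htn]
        exact hxk
    rw [hD]
    ring
end

section
/- With α(n) ≪ n^ε and ∑_{n=1}^∞ α(n)/n convergent, set C = (1/2)∑_{n=1}^∞ α(n)/n², E(x) = ∑_{n≤x} n∑_{m|n}α(m)/m - Cx², and f₁(x) = ∑_{n=1}^∞ (α(n)/n)s(x/n). Then the function R(x) = E₂(x) - x·f₁(x) is continuous on (0,∞), where E₂ equals E off the integers and the average of one-sided limits at integers. -/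
open Filter Topology Classical

lemma saw_Ioo {y : ℝ} (h0 : 0 < y) (h1 : y < 1) : saw y = 1/2 - y := by
  rw [saw, if_neg, Int.fract_eq_self.2 ⟨h0.le, h1⟩]
  rintro ⟨k, rfl⟩
  have h0' : (0:ℤ) < k := by exact_mod_cast h0
  have h1' : k < 1 := by exact_mod_cast h1
  omega

lemma fract_div_nat {x : ℝ} (hx : 0 ≤ x) (n : ℕ) :
    Int.fract (x / n) = x / n - ((⌊x⌋₊ / n : ℕ) : ℝ) := by
  have h0 : (0:ℝ) ≤ x / n := div_nonneg hx (Nat.cast_nonneg n)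
  rw [Int.fract]
  congr 1
  rw [← Nat.floor_div_natCast, ← natCast_floor_eq_intCast_floor h0]

lemma saw_div_nat (N : ℕ) {n : ℕ} (hn : 1 ≤ n) {x : ℝ} (h1 : (N:ℝ) < x) (h2 : x < N + 1) :
    saw (x / n) = 1/2 - x / n + ((N / n : ℕ) : ℝ) := by
  have hx0 : 0 < x := lt_of_le_of_lt (Nat.cast_nonneg N) h1
  have hfl : ⌊x⌋₊ = N := by
    rw [Nat.floor_eq_iff hx0.le]; exact ⟨h1.le, h2⟩
  have hni : ¬∃ k : ℤ, x / n = (k : ℝ) := by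
    rintro ⟨k, hk⟩
    have hfr : Int.fract (x / n) = 0 := by rw [hk, Int.fract_intCast]
    rw [fract_div_nat hx0.le, hfl, sub_eq_zero] at hfr
    have hn0 : (n:ℝ) ≠ 0 := by exact_mod_cast Nat.one_le_iff_ne_zero.mp hn
    have hx : x = ((n * (N / n) : ℕ) : ℝ) := by
      push_cast
      field_simp at hfr
      linarith [hfr]
    rw [hx] at h1 h2
    have hA : N < n * (N / n) := by exact_mod_cast h1
    have hB : (n * (N / n) : ℕ) < N + 1 := by exact_mod_cast h2
    omega
  rw [saw, if_neg hni, fract_div_nat hx0.le, hfl]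
  ring

lemma saw_nat_div (N : ℕ) {n : ℕ} (hn : 1 ≤ n) (hN : 1 ≤ N) :
    saw ((N : ℝ) / n) = 1/2 - (N:ℝ)/n + ((N / n : ℕ) : ℝ) - (if n ∣ N then (1:ℝ)/2 else 0) := by
  have hn0 : (n:ℝ) ≠ 0 := by exact_mod_cast Nat.one_le_iff_ne_zero.mp hn
  by_cases hd : n ∣ N
  · obtain ⟨k, rfl⟩ := hd
    have hk : (n * k) / n = k := Nat.mul_div_cancel_left k (by omega)
    have he : ((n * k : ℕ) : ℝ) / n = (k : ℝ) := by push_cast; field_simp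
    rw [saw, if_pos ⟨k, by rw [he]; norm_num⟩, if_pos ⟨k, rfl⟩, hk, he]
    ring
  · have hni : ¬∃ k : ℤ, (N:ℝ) / n = (k : ℝ) := by
      rintro ⟨k, hk⟩
      have hfr : Int.fract ((N:ℝ) / n) = 0 := by rw [hk, Int.fract_intCast]
      rw [fract_div_nat (Nat.cast_nonneg N), Nat.floor_natCast, sub_eq_zero] at hfr
      have h1 : (N : ℝ) = ((n * (N / n) : ℕ) : ℝ) := by push_cast; field_simp at hfr; linarith [hfr]
      have h2 : N = n * (N / n) := by exact_mod_cast h1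
      exact hd ⟨N / n, h2⟩
    rw [saw, if_neg hni, fract_div_nat (Nat.cast_nonneg N), Nat.floor_natCast, if_neg hd]
    ring

noncomputable def ps1 (α : ℕ → ℂ) (N : ℕ) : ℂ := ∑ n ∈ Finset.Icc 1 N, α n / (n:ℂ)
noncomputable def ps2 (α : ℕ → ℂ) (N : ℕ) : ℂ := ∑ n ∈ Finset.Icc 1 N, α n / (n:ℂ)^2
noncomputable def Gf (α : ℕ → ℂ) (N : ℕ) : ℂ :=
  ∑ n ∈ Finset.Icc 1 N, (n:ℂ) * ∑ m ∈ n.divisors, α m / (m:ℂ)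

/-- base term of the polynomial replacement of the sawtooth sum on `[N, N+1)`. -/
noncomputable def bterm (α : ℕ → ℂ) (N n : ℕ) (x : ℝ) : ℂ :=
  (α n / (n:ℂ)) * ((1:ℂ)/2 - (x:ℂ)/(n:ℂ) + ((N / n : ℕ) : ℂ))

noncomputable def dterm (α : ℕ → ℂ) (N n : ℕ) : ℂ := if n ∣ N then α n / (n:ℂ) else 0

noncomputable def Psi (α : ℕ → ℂ) (L C : ℂ) (N : ℕ) (x : ℝ) : ℂ :=
  Gf α N - (x:ℂ) * (∑ n ∈ Finset.Icc 1 N, bterm α N n x)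
    - ((x:ℂ)/2) * (L - ps1 α N) + (x:ℂ)^2 * (C - ps2 α N)

lemma Psi_continuous (α : ℕ → ℂ) (L C : ℂ) (N : ℕ) : Continuous (Psi α L C N) := by
  unfold Psi bterm
  have hc : Continuous (fun x : ℝ => (x:ℂ)) := Complex.continuous_ofReal
  apply Continuous.add
  · apply Continuous.sub
    · apply Continuous.sub continuous_const
      exact hc.mul (continuous_finset_sum _ fun n _ =>
        continuous_const.mul (((continuous_const.sub (hc.div_const _)).add continuous_const)))
    · exact (hc.div_const _).mul continuous_const
  · exact (hc.pow 2).mul continuous_const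

lemma div_sum_eq (α : ℕ → ℂ) (N : ℕ) (hN : 1 ≤ N) :
    ∑ m ∈ N.divisors, α m / (m:ℂ) = ∑ n ∈ Finset.Icc 1 N, dterm α N n := by
  unfold dterm
  rw [← Finset.sum_filter]
  apply Finset.sum_congr _ (fun _ _ => rfl)
  ext m
  simp only [Nat.mem_divisors, Finset.mem_filter, Finset.mem_Icc]
  constructor
  · rintro ⟨hd, h0⟩
    exact ⟨⟨Nat.pos_of_dvd_of_pos hd (by omega), Nat.le_of_dvd (by omega) hd⟩, hd⟩
  · rintro ⟨_, hd⟩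
    exact ⟨hd, by omega⟩

lemma sawsum (α : ℕ → ℂ) (N : ℕ) (hN : 1 ≤ N) :
    (∑ n ∈ Finset.Icc 1 N, (α n / (n:ℂ)) * ((saw ((N:ℝ) / n) : ℝ) : ℂ))
      = (∑ n ∈ Finset.Icc 1 N, bterm α N n (N:ℝ))
        - (1/2) * ∑ n ∈ Finset.Icc 1 N, dterm α N n := by
  rw [Finset.mul_sum, ← Finset.sum_sub_distrib]
  apply Finset.sum_congr rfl
  intro n hn
  have hn1 : 1 ≤ n := (Finset.mem_Icc.mp hn).1
  rw [saw_nat_div N hn1 hN]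
  unfold bterm dterm
  by_cases hd : n ∣ N
  · rw [if_pos hd, if_pos hd]
    push_cast
    ring
  · rw [if_neg hd, if_neg hd]
    push_cast
    ring

lemma f1_formula (α : ℕ → ℂ) (L C : ℂ)
    (hL : Tendsto (fun N : ℕ => ∑ n ∈ Finset.Icc 1 N, α n / (n : ℂ)) atTop (𝓝 L))
    (hC : Tendsto (fun N : ℕ => ∑ n ∈ Finset.Icc 1 N, α n / (n : ℂ)^2) atTop (𝓝 (2 * C)))
    (f₁ : ℝ → ℂ) {x : ℝ}
    (hf₁ : Tendsto
      (fun N : ℕ => ∑ n ∈ Finset.Icc 1 N, (α n / (n : ℂ)) * ((saw (x / n) : ℝ) : ℂ))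
      atTop (𝓝 (f₁ x)))
    (hx : 0 < x) :
    f₁ x = (∑ n ∈ Finset.Icc 1 ⌊x⌋₊, (α n / (n:ℂ)) * ((saw (x / n) : ℝ) : ℂ))
      + (1/2) * (L - ps1 α ⌊x⌋₊) - (x:ℂ) * (2*C - ps2 α ⌊x⌋₊) := by
  set N := ⌊x⌋₊ with hNdef
  have hxN : x < N + 1 := Nat.lt_floor_add_one x
  have e : ∀ K : ℕ, Finset.Icc 1 K = Finset.Ioc 0 K := fun K => Finset.Icc_add_one_left_eq_Ioc 0 K
  have key : ∀ M, N ≤ M → (∑ n ∈ Finset.Icc 1 M, (α n / (n:ℂ)) * ((saw (x / n) : ℝ) : ℂ))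
      = (∑ n ∈ Finset.Icc 1 N, (α n / (n:ℂ)) * ((saw (x / n) : ℝ) : ℂ))
        + (1/2) * (ps1 α M - ps1 α N) - (x:ℂ) * (ps2 α M - ps2 α N) := by
    intro M hM
    have hsplit := Finset.sum_Ioc_consecutive
      (fun n : ℕ => (α n / (n:ℂ)) * ((saw (x / n) : ℝ) : ℂ)) (Nat.zero_le N) hM
    have hterm : ∀ n ∈ Finset.Ioc N M, (α n / (n:ℂ)) * ((saw (x / n) : ℝ) : ℂ)
        = (1/2) * (α n / (n:ℂ)) - (x:ℂ) * (α n / (n:ℂ)^2) := by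
      intro n hn
      obtain ⟨hn1, hn2⟩ := Finset.mem_Ioc.mp hn
      have hn0 : 0 < n := lt_of_le_of_lt (Nat.zero_le N) hn1
      have hnx : x < n := lt_of_lt_of_le hxN (by exact_mod_cast Nat.succ_le_of_lt hn1)
      have hnR : (0:ℝ) < n := by exact_mod_cast hn0
      have h01 : 0 < x / n := div_pos hx hnR
      have h02 : x / n < 1 := (div_lt_one hnR).mpr hnx
      rw [saw_Ioo h01 h02]
      have hn0c : (n:ℂ) ≠ 0 := by exact_mod_cast hn0.ne'
      push_cast
      field_simp
    have hmid : ∑ n ∈ Finset.Ioc N M, (α n / (n:ℂ)) * ((saw (x / n) : ℝ) : ℂ)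
        = (1/2) * (ps1 α M - ps1 α N) - (x:ℂ) * (ps2 α M - ps2 α N) := by
      rw [Finset.sum_congr rfl hterm, Finset.sum_sub_distrib, ← Finset.mul_sum, ← Finset.mul_sum]
      have hA : ∑ n ∈ Finset.Ioc N M, α n / (n:ℂ) = ps1 α M - ps1 α N := by
        have := Finset.sum_Ioc_consecutive (fun n : ℕ => α n / (n:ℂ)) (Nat.zero_le N) hM
        unfold ps1
        rw [e N, e M]
        linear_combination this
      have hB : ∑ n ∈ Finset.Ioc N M, α n / (n:ℂ)^2 = ps2 α M - ps2 α N := by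
        have := Finset.sum_Ioc_consecutive (fun n : ℕ => α n / (n:ℂ)^2) (Nat.zero_le N) hM
        unfold ps2
        rw [e N, e M]
        linear_combination this
      rw [hA, hB]
    rw [e M, ← hsplit, ← e N, hmid]
    ring
  have htend : Tendsto (fun M : ℕ =>
      (∑ n ∈ Finset.Icc 1 N, (α n / (n:ℂ)) * ((saw (x / n) : ℝ) : ℂ))
        + (1/2) * (ps1 α M - ps1 α N) - (x:ℂ) * (ps2 α M - ps2 α N)) atTop
      (𝓝 ((∑ n ∈ Finset.Icc 1 N, (α n / (n:ℂ)) * ((saw (x / n) : ℝ) : ℂ))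
        + (1/2) * (L - ps1 α N) - (x:ℂ) * (2*C - ps2 α N))) := by
    apply Tendsto.sub
    · exact Tendsto.const_add _ (Tendsto.const_mul _ (hL.sub_const _))
    · exact Tendsto.const_mul _ (hC.sub_const _)
  exact tendsto_nhds_unique hf₁ (htend.congr'
    (by filter_upwards [eventually_ge_atTop N] with M hM using (key M hM).symm))

lemma E2_val (α : ℕ → ℂ) (C : ℂ) (E E₂ : ℝ → ℂ)
    (hE : ∀ x : ℝ, E x =
      ∑ n ∈ Finset.Icc 1 ⌊x⌋₊, (n : ℂ) * ∑ m ∈ n.divisors, α m / (m : ℂ) - C * (x : ℂ)^2)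
    (hE₂int : ∀ N : ℕ, 0 < N → ∃ Lp Lm : ℂ,
      Tendsto E (nhdsWithin (N : ℝ) (Set.Ioi (N : ℝ))) (𝓝 Lp) ∧
      Tendsto E (nhdsWithin (N : ℝ) (Set.Iio (N : ℝ))) (𝓝 Lm) ∧
      E₂ (N : ℝ) = (Lm + Lp) / 2)
    (N : ℕ) (hN : 1 ≤ N) :
    E₂ (N : ℝ) = (Gf α (N-1) + Gf α N)/2 - C * (N:ℂ)^2 := by
  obtain ⟨Lp, Lm, hLp, hLm, hEq⟩ := hE₂int N hN
  have hcont : ∀ (c : ℂ), Tendsto (fun y : ℝ => c - C * (y:ℂ)^2) (𝓝 ((N:ℝ)))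
      (𝓝 (c - C * ((N:ℝ):ℂ)^2)) := by
    intro c
    apply Continuous.tendsto
    exact continuous_const.sub (continuous_const.mul ((Complex.continuous_ofReal).pow 2))
  have h1 : Tendsto E (𝓝[>] (N:ℝ)) (𝓝 (Gf α N - C * ((N:ℝ):ℂ)^2)) := by
    apply Filter.Tendsto.congr' _ (((hcont (Gf α N)).mono_left nhdsWithin_le_nhds))
    filter_upwards [Ioo_mem_nhdsGT_of_mem
      (Set.mem_Ico.mpr ⟨le_refl (N:ℝ), lt_add_one _⟩)] with y hy
    have hfl : ⌊y⌋₊ = N := by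
      rw [Nat.floor_eq_iff (le_trans (Nat.cast_nonneg N) hy.1.le)]
      exact ⟨hy.1.le, hy.2⟩
    rw [hE y, hfl, Gf]
  have h2 : Tendsto E (𝓝[<] (N:ℝ)) (𝓝 (Gf α (N-1) - C * ((N:ℝ):ℂ)^2)) := by
    apply Filter.Tendsto.congr' _ (((hcont (Gf α (N-1))).mono_left nhdsWithin_le_nhds))
    filter_upwards [Ioo_mem_nhdsLT_of_mem (a := (N:ℝ)-1) (c := (N:ℝ))
      (Set.mem_Ioc.mpr ⟨by linarith [lt_add_one ((N:ℝ) - 1)], le_refl (N:ℝ)⟩)] with y hy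
    have hy0 : (0:ℝ) ≤ y := by
      have : (1:ℝ) ≤ (N:ℝ) := by exact_mod_cast hN
      linarith [hy.1]
    have hfl : ⌊y⌋₊ = N - 1 := by
      rw [Nat.floor_eq_iff hy0]
      constructor
      · rw [Nat.cast_sub hN]; push_cast; linarith [hy.1]
      · rw [Nat.cast_sub hN]; push_cast; linarith [hy.2]
    rw [hE y, hfl, Gf]
  have e1 : Lp = Gf α N - C * ((N:ℝ):ℂ)^2 := tendsto_nhds_unique hLp h1
  have e2 : Lm = Gf α (N-1) - C * ((N:ℝ):ℂ)^2 := tendsto_nhds_unique hLm h2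
  rw [hEq, e1, e2]
  push_cast
  ring

lemma R_eq_Psi (α : ℕ → ℂ) (L C : ℂ)
    (hL : Tendsto (fun N : ℕ => ∑ n ∈ Finset.Icc 1 N, α n / (n : ℂ)) atTop (𝓝 L))
    (hC : Tendsto (fun N : ℕ => ∑ n ∈ Finset.Icc 1 N, α n / (n : ℂ)^2) atTop (𝓝 (2 * C)))
    (E E₂ f₁ : ℝ → ℂ)
    (hE : ∀ x : ℝ, E x =
      ∑ n ∈ Finset.Icc 1 ⌊x⌋₊, (n : ℂ) * ∑ m ∈ n.divisors, α m / (m : ℂ) - C * (x : ℂ)^2)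
    (hE₂ : ∀ x : ℝ, (¬ ∃ N : ℕ, 0 < N ∧ x = (N : ℝ)) → E₂ x = E x)
    (hf₁ : ∀ x : ℝ, Tendsto
      (fun N : ℕ => ∑ n ∈ Finset.Icc 1 N, (α n / (n : ℂ)) * ((saw (x / n) : ℝ) : ℂ))
      atTop (𝓝 (f₁ x)))
    (N : ℕ) {x : ℝ} (hx : x ∈ Set.Ioo (N:ℝ) ((N:ℝ)+1)) :
    E₂ x - (x:ℂ) * f₁ x = Psi α L C N x := by
  have hx0 : 0 < x := lt_of_le_of_lt (Nat.cast_nonneg N) hx.1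
  have hfl : ⌊x⌋₊ = N := by
    rw [Nat.floor_eq_iff hx0.le]; exact ⟨hx.1.le, hx.2⟩
  have hnotint : ¬∃ M : ℕ, 0 < M ∧ x = (M:ℝ) := by
    rintro ⟨M, hM, rfl⟩
    have h1 : N < M := by exact_mod_cast hx.1
    have h2 : M < N + 1 := by exact_mod_cast hx.2
    omega
  have hf := f1_formula α L C hL hC f₁ (hf₁ x) hx0
  rw [hfl] at hf
  have hsaw : (∑ n ∈ Finset.Icc 1 N, (α n / (n:ℂ)) * ((saw (x / n) : ℝ) : ℂ))
      = ∑ n ∈ Finset.Icc 1 N, bterm α N n x := by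
    apply Finset.sum_congr rfl
    intro n hn
    have hn1 : 1 ≤ n := (Finset.mem_Icc.mp hn).1
    rw [saw_div_nat N hn1 hx.1 hx.2]
    unfold bterm
    push_cast
    ring
  rw [hE₂ x hnotint, hE x, hfl, hf, hsaw]
  unfold Psi Gf
  ring


set_option maxHeartbeats 1000000 in
/-- With `α(n) ≪ n^ε`, `∑ α(n)/n` convergent, `C = (1/2)∑ α(n)/n²`,
`E(x) = ∑_{n≤x} n ∑_{m|n} α(m)/m - Cx²`, `E₂` the normalization of `E`
(averaging one-sided limits at positive integers) and `f₁(x) = ∑ (α(n)/n)s(x/n)`,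
the function `R(x) = E₂(x) - x·f₁(x)` is continuous on `(0,∞)`. -/
theorem R_continuousOn (α : ℕ → ℂ)
    (hgrow : ∀ ε : ℝ, 0 < ε → ∃ c : ℝ, ∀ n : ℕ, 1 ≤ n → ‖α n‖ ≤ c * (n : ℝ) ^ ε)
    (hα : ∃ l : ℂ, Tendsto (fun N : ℕ => ∑ n ∈ Finset.Icc 1 N, α n / (n : ℂ)) atTop (𝓝 l))
    (C : ℂ)
    (hC : Tendsto (fun N : ℕ => ∑ n ∈ Finset.Icc 1 N, α n / (n : ℂ)^2) atTop (𝓝 (2 * C)))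
    (E : ℝ → ℂ)
    (hE : ∀ x : ℝ, E x =
      ∑ n ∈ Finset.Icc 1 ⌊x⌋₊, (n : ℂ) * ∑ m ∈ n.divisors, α m / (m : ℂ) - C * (x : ℂ)^2)
    (E₂ : ℝ → ℂ)
    (hE₂ : ∀ x : ℝ, (¬ ∃ N : ℕ, 0 < N ∧ x = (N : ℝ)) → E₂ x = E x)
    (hE₂int : ∀ N : ℕ, 0 < N → ∃ Lp Lm : ℂ,
      Tendsto E (nhdsWithin (N : ℝ) (Set.Ioi (N : ℝ))) (𝓝 Lp) ∧
      Tendsto E (nhdsWithin (N : ℝ) (Set.Iio (N : ℝ))) (𝓝 Lm) ∧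
      E₂ (N : ℝ) = (Lm + Lp) / 2)
    (f₁ : ℝ → ℂ)
    (hf₁ : ∀ x : ℝ, Tendsto
      (fun N : ℕ => ∑ n ∈ Finset.Icc 1 N, (α n / (n : ℂ)) * ((saw (x / n) : ℝ) : ℂ))
      atTop (𝓝 (f₁ x))) :
    ContinuousOn (fun x : ℝ => E₂ x - (x : ℂ) * f₁ x) (Set.Ioi 0) := by
  obtain ⟨L, hL⟩ := hα
  have key : ∀ x₀ ∈ Set.Ioi (0:ℝ), ContinuousAt (fun x : ℝ => E₂ x - (x:ℂ) * f₁ x) x₀ := by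
    intro x₀ hx₀
    simp only [Set.mem_Ioi] at hx₀
    by_cases hint : ∃ M : ℕ, 0 < M ∧ x₀ = (M:ℝ)
    · obtain ⟨N, hNpos, rfl⟩ := hint
      obtain ⟨M, rfl⟩ : ∃ M, N = M + 1 := ⟨N - 1, by omega⟩
      have hν : ((M+1:ℕ):ℂ) ≠ 0 := by exact_mod_cast Nat.succ_ne_zero M
      have hE2v := E2_val α C E E₂ hE hE₂int (M+1) (by omega)
      simp only [Nat.add_sub_cancel] at hE2v
      have hf1v := f1_formula α L C hL hC f₁ (hf₁ ((M+1:ℕ):ℝ))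
        (by exact_mod_cast Nat.succ_pos M)
      rw [Nat.floor_natCast] at hf1v
      have hsawS := sawsum α (M+1) (by omega)
      have hGrec : Gf α (M+1)
          = Gf α M + ((M+1:ℕ):ℂ) * ∑ n ∈ Finset.Icc 1 (M+1), dterm α (M+1) n := by
        rw [← div_sum_eq α (M+1) (by omega)]
        unfold Gf
        rw [Finset.sum_Icc_succ_top (by omega)]
      have hb1 : ps1 α (M+1) = ps1 α M + α (M+1) / ((M+1:ℕ):ℂ) := by
        unfold ps1; rw [Finset.sum_Icc_succ_top (by omega)]
      have hb2 : ps2 α (M+1) = ps2 α M + α (M+1) / ((M+1:ℕ):ℂ)^2 := by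
        unfold ps2; rw [Finset.sum_Icc_succ_top (by omega)]
      have hb2' : ps2 α (M+1) = ps2 α M + α (M+1) / ((M+1:ℕ):ℂ) / ((M+1:ℕ):ℂ) := by
        rw [hb2, div_div, ← pow_two]
      have hbase : ∑ n ∈ Finset.Icc 1 (M+1), bterm α (M+1) n ((M+1:ℕ):ℝ)
          = (∑ n ∈ Finset.Icc 1 M, bterm α (M+1) n ((M+1:ℕ):ℝ))
            + (α (M+1) / ((M+1:ℕ):ℂ)) * (1/2) := by
        rw [Finset.sum_Icc_succ_top (by omega)]
        congr 1
        unfold bterm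
        rw [Nat.div_self (by omega : 0 < M+1)]
        have hν' : ((M:ℂ)+1) ≠ 0 := by exact_mod_cast hν
        push_cast
        field_simp [hν']
        ring
      have hdsum : ∑ n ∈ Finset.Icc 1 (M+1), dterm α (M+1) n
          = (∑ n ∈ Finset.Icc 1 M, dterm α (M+1) n) + α (M+1) / ((M+1:ℕ):ℂ) := by
        rw [Finset.sum_Icc_succ_top (by omega)]
        congr 1
        unfold dterm
        rw [if_pos dvd_rfl]
      have hbM : ∑ n ∈ Finset.Icc 1 M, bterm α M n ((M+1:ℕ):ℝ)
          = (∑ n ∈ Finset.Icc 1 M, bterm α (M+1) n ((M+1:ℕ):ℝ))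
            - ∑ n ∈ Finset.Icc 1 M, dterm α (M+1) n := by
        rw [← Finset.sum_sub_distrib]
        apply Finset.sum_congr rfl
        intro n hn
        unfold bterm dterm
        have hdiv : (M+1) / n = M / n + if n ∣ M+1 then 1 else 0 := Nat.succ_div (a := M) (b := n)
        by_cases hd : n ∣ M + 1
        · rw [if_pos hd, hdiv, if_pos hd]
          push_cast
          ring
        · rw [if_neg hd, hdiv, if_neg hd]
          push_cast
          ring
      have hRight : E₂ ((M+1:ℕ):ℝ) - (((M+1:ℕ):ℝ):ℂ) * f₁ ((M+1:ℕ):ℝ)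
          = Psi α L C (M+1) ((M+1:ℕ):ℝ) := by
        rw [hE2v, hf1v, hsawS]
        unfold Psi
        rw [hGrec, hbase, hdsum, hb1, hb2']
        generalize Gf α M = g
        generalize (∑ n ∈ Finset.Icc 1 M, bterm α (M+1) n ((M+1:ℕ):ℝ)) = A
        generalize (∑ n ∈ Finset.Icc 1 M, dterm α (M+1) n) = D
        generalize ps1 α M = p
        generalize ps2 α M = q
        generalize (α (M+1) / ((M+1:ℕ):ℂ)) = b
        have hrel : b / ((M+1:ℕ):ℂ) * ((M+1:ℕ):ℂ) = b := div_mul_cancel₀ b hν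
        set c := b / ((M+1:ℕ):ℂ) with hc
        rw [← hrel]
        push_cast
        ring
      have hLeft : E₂ ((M+1:ℕ):ℝ) - (((M+1:ℕ):ℝ):ℂ) * f₁ ((M+1:ℕ):ℝ)
          = Psi α L C M ((M+1:ℕ):ℝ) := by
        rw [hE2v, hf1v, hsawS]
        unfold Psi
        rw [hbM, hGrec, hbase, hdsum, hb1, hb2']
        generalize Gf α M = g
        generalize (∑ n ∈ Finset.Icc 1 M, bterm α (M+1) n ((M+1:ℕ):ℝ)) = A
        generalize (∑ n ∈ Finset.Icc 1 M, dterm α (M+1) n) = D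
        generalize ps1 α M = p
        generalize ps2 α M = q
        generalize (α (M+1) / ((M+1:ℕ):ℂ)) = b
        have hrel : b / ((M+1:ℕ):ℂ) * ((M+1:ℕ):ℂ) = b := div_mul_cancel₀ b hν
        set c := b / ((M+1:ℕ):ℂ) with hc
        rw [← hrel]
        push_cast
        ring
      have hR : Tendsto (fun x : ℝ => E₂ x - (x:ℂ) * f₁ x) (𝓝[>] ((M+1:ℕ):ℝ))
          (𝓝 (E₂ ((M+1:ℕ):ℝ) - (((M+1:ℕ):ℝ):ℂ) * f₁ ((M+1:ℕ):ℝ))) := by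
        rw [hRight]
        apply Filter.Tendsto.congr' _
          (((Psi_continuous α L C (M+1)).tendsto _).mono_left nhdsWithin_le_nhds)
        filter_upwards [Ioo_mem_nhdsGT_of_mem
          (Set.mem_Ico.mpr ⟨le_refl ((M+1:ℕ):ℝ), lt_add_one _⟩)] with y hy
        exact (R_eq_Psi α L C hL hC E E₂ f₁ hE hE₂ hf₁ (M+1) hy).symm
      have hLt : Tendsto (fun x : ℝ => E₂ x - (x:ℂ) * f₁ x) (𝓝[<] ((M+1:ℕ):ℝ))
          (𝓝 (E₂ ((M+1:ℕ):ℝ) - (((M+1:ℕ):ℝ):ℂ) * f₁ ((M+1:ℕ):ℝ))) := by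
        rw [hLeft]
        apply Filter.Tendsto.congr' _
          (((Psi_continuous α L C M).tendsto _).mono_left nhdsWithin_le_nhds)
        filter_upwards [Ioo_mem_nhdsLT_of_mem (a := ((M:ℕ):ℝ)) (c := ((M:ℕ):ℝ)+1)
          (Set.mem_Ioc.mpr ⟨by push_cast; linarith, by push_cast; linarith⟩)] with y hy
        exact (R_eq_Psi α L C hL hC E E₂ f₁ hE hE₂ hf₁ M hy).symm
      unfold ContinuousAt
      have hnn : 𝓝 ((M+1:ℕ):ℝ)
          = (𝓝[<] ((M+1:ℕ):ℝ) ⊔ 𝓝[>] ((M+1:ℕ):ℝ)) ⊔ pure ((M+1:ℕ):ℝ) := by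
        rw [nhdsLT_sup_nhdsGT, nhdsNE_sup_pure]
      rw [hnn, Filter.tendsto_sup, Filter.tendsto_sup]
      exact ⟨⟨hLt, hR⟩, tendsto_pure_nhds _ _⟩
    · have h2 : x₀ < (⌊x₀⌋₊:ℝ) + 1 := Nat.lt_floor_add_one x₀
      have h1 : (⌊x₀⌋₊:ℝ) < x₀ := by
        rcases lt_or_eq_of_le (Nat.floor_le hx₀.le) with h | h
        · exact h
        · exfalso
          apply hint
          refine ⟨⌊x₀⌋₊, ?_, h.symm⟩
          rcases Nat.eq_zero_or_pos ⌊x₀⌋₊ with h0 | h0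
          · exfalso
            rw [h0] at h
            simp at h
            exact absurd h.symm (ne_of_gt hx₀)
          · exact h0
      apply ((Psi_continuous α L C ⌊x₀⌋₊).continuousAt).congr
      have hmem : Set.Ioo ((⌊x₀⌋₊:ℝ)) ((⌊x₀⌋₊:ℝ)+1) ∈ 𝓝 x₀ := isOpen_Ioo.mem_nhds ⟨h1, h2⟩
      filter_upwards [hmem] with y hy
      exact (R_eq_Psi α L C hL hC E E₂ f₁ hE hE₂ hf₁ ⌊x₀⌋₊ hy).symm
  exact fun x hx => (key x hx).continuousWithinAt
end
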